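/- arXiv:2002.08726 — 4 statements merged into one kernel-verified Lean document; each statement's English description precedes it below -/
import Mathlib

section
/- Let I be a compact interval in R and let phi be a smooth (C^infinity) real-valued function on I. Denote by E the zero set of phi and by {I_k}_k the connected component intervals of I \ E. Then for every epsilon > 0 the series sum_k (sup_{I_k} |phi|)^{epsilon} converges. -/
/-!
Fix `n` with `n ε > 1`. If a component lies in an interval of length `δ` containing `n` zeros of
`φ`, then `n` applications of Rolle's theorem bound `|φ|` on it by `δⁿ ‖φ⁽ⁿ⁾‖∞`. Among `n + 3`
components meeting a window of length `δ`, the zeros separating them put the second one in such an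
interval; hence at most `(n + 2)(m + 1)` components escape this bound at scale `δ = (b - a) / m`.
Taking `m = 2^j`, only `O(2^j)` components have `sup |φ| > C 2^(-n j)`, and `∑ⱼ 2^j 2^(-n ε j)`
converges.
-/

open Set
open scoped Finset

theorem abs_le_pow_mul_of_hasDerivWithinAt_chain {u v B : ℝ} (n : ℕ) (F : ℕ → ℝ → ℝ)
    (hF : ∀ j < n, ∀ x ∈ Icc u v, HasDerivWithinAt (F j) (F (j + 1) x) (Icc u v) x)
    (hB : ∀ x ∈ Icc u v, |F n x| ≤ B) {z : Fin n → ℝ} (hz : StrictMono z)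
    (hzI : ∀ i, z i ∈ Icc u v) (hz0 : ∀ i, F 0 (z i) = 0) {x : ℝ} (hx : x ∈ Icc u v) :
    |F 0 x| ≤ (v - u) ^ n * B := by
  induction n generalizing F x with
  | zero => simpa using hB x hx
  | succ n ih =>
    have hF0 := hF 0 n.succ_pos
    have hrolle : ∀ i : Fin n, ∃ w ∈ Ioo (z i.castSucc) (z i.succ), F 1 w = 0 := by
      intro i
      have hsub : Icc (z i.castSucc) (z i.succ) ⊆ Icc u v :=
        Icc_subset_Icc (hzI _).1 (hzI _).2
      refine exists_hasDerivAt_eq_zero (hz i.castSucc_lt_succ)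
        (fun y hy => (hF0 y (hsub hy)).continuousWithinAt.mono hsub) (by rw [hz0, hz0])
        fun y hy => (hF0 y (hsub (Ioo_subset_Icc_self hy))).hasDerivAt (Icc_mem_nhds ?_ ?_)
      · exact (hzI _).1.trans_lt hy.1
      · exact hy.2.trans_le (hzI _).2
    choose w hw hw0 using hrolle
    have hw_mono : StrictMono w := fun i j hij =>
      (hw i).2.trans ((hz.monotone (Fin.succ_le_castSucc_iff.2 hij)).trans_lt (hw j).1)
    have hF1 : ∀ y ∈ Icc u v, |F 1 y| ≤ (v - u) ^ n * B := fun y hy =>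
      ih (fun j => F (j + 1)) (fun j hj => hF (j + 1) (by omega)) hB hw_mono
        (fun i => ⟨(hzI _).1.trans (hw i).1.le, (hw i).2.le.trans (hzI _).2⟩) hw0 hy
    have hmvt : |F 0 x - F 0 (z 0)| ≤ (v - u) ^ n * B * |x - z 0| := by
      simpa only [Real.norm_eq_abs] using
        (convex_Icc u v).norm_image_sub_le_of_norm_hasDerivWithin_le hF0
          (fun y hy => by simpa only [Real.norm_eq_abs] using hF1 y hy) (hzI 0) hx
    have hB0 : 0 ≤ B := (abs_nonneg _).trans (hB x hx)
    have hvu : 0 ≤ v - u := sub_nonneg.2 (hx.1.trans hx.2)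
    have hxz : |x - z 0| ≤ v - u := abs_sub_le_of_le_of_le hx.1 hx.2 (hzI 0).1 (hzI 0).2
    calc |F 0 x| = |F 0 x - F 0 (z 0)| := by rw [hz0, sub_zero]
      _ ≤ (v - u) ^ n * B * (v - u) := hmvt.trans (by gcongr)
      _ = (v - u) ^ (n + 1) * B := by ring

theorem hasDerivWithinAt_iteratedDerivWithin {𝕜 : Type*} [NontriviallyNormedField 𝕜]
    {f : 𝕜 → 𝕜} {s : Set 𝕜} {n j : ℕ} (hs : UniqueDiffOn 𝕜 s) (hf : ContDiffOn 𝕜 n f s)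
    (hj : j < n) {x : 𝕜} (hx : x ∈ s) :
    HasDerivWithinAt (iteratedDerivWithin j f s) (iteratedDerivWithin (j + 1) f s x) s x := by
  rw [iteratedDerivWithin_succ]
  exact (hf.differentiableOn_iteratedDerivWithin (by exact_mod_cast hj) hs x hx).hasDerivWithinAt

def EnclosedWithZeros (a b : ℝ) (Z : Set ℝ) (n : ℕ) (δ : ℝ) (C : Set ℝ) : Prop :=
  ∃ u v, Icc u v ⊆ Icc a b ∧ v - u ≤ δ ∧ C ⊆ Icc u v ∧
    ∃ z : Fin n → ℝ, StrictMono z ∧ ∀ i, z i ∈ Z ∩ Icc u v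

theorem abs_le_of_enclosedWithZeros {φ : ℝ → ℝ} {a b B δ : ℝ} {n : ℕ} {Z C : Set ℝ}
    (hab : a < b) (hφ : ContDiffOn ℝ n φ (Icc a b))
    (hB : ∀ x ∈ Icc a b, |iteratedDerivWithin n φ (Icc a b) x| ≤ B) (hZ : ∀ z ∈ Z, φ z = 0)
    (hC : EnclosedWithZeros a b Z n δ C) {x : ℝ} (hx : x ∈ C) :
    |φ x| ≤ δ ^ n * B := by
  obtain ⟨u, v, huv, hδ, hCuv, z, hz, hzZ⟩ := hC
  have hchain := abs_le_pow_mul_of_hasDerivWithinAt_chain n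
    (fun j => iteratedDerivWithin j φ (Icc a b))
    (fun j hj y hy =>
      (hasDerivWithinAt_iteratedDerivWithin (uniqueDiffOn_Icc hab) hφ hj (huv hy)).mono huv)
    (fun y hy => hB y (huv hy)) hz (fun i => (hzZ i).2)
    (fun i => by simpa using hZ _ (hzZ i).1) (hCuv hx)
  rw [iteratedDerivWithin_zero] at hchain
  have hvu : 0 ≤ v - u := sub_nonneg.2 ((hCuv hx).1.trans (hCuv hx).2)
  have hB0 : 0 ≤ B := (abs_nonneg _).trans (hB a (left_mem_Icc.2 hab.le))
  exact hchain.trans (by gcongr)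

abbrev ComponentsIn {X : Type*} [TopologicalSpace X] (S : Set X) : Type _ :=
  {C : Set X // ∃ x ∈ S, C = connectedComponentIn S x}

namespace ComponentsIn

variable {X : Type*} [TopologicalSpace X] {S : Set X}

theorem subset (C : ComponentsIn S) : C.1 ⊆ S := by
  obtain ⟨x, -, hC⟩ := C.2
  exact hC ▸ connectedComponentIn_subset S x

theorem nonempty (C : ComponentsIn S) : C.1.Nonempty := by
  obtain ⟨x, hx, hC⟩ := C.2
  exact hC ▸ ⟨x, mem_connectedComponentIn hx⟩

theorem eq_connectedComponentIn {C : ComponentsIn S} {x : X} (hx : x ∈ C.1) :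
    C.1 = connectedComponentIn S x := by
  obtain ⟨y, -, hC⟩ := C.2
  rw [hC] at hx ⊢
  exact connectedComponentIn_eq hx

theorem eq_of_mem {C C' : ComponentsIn S} {x : X} (hx : x ∈ C.1) (hx' : x ∈ C'.1) : C = C' :=
  Subtype.ext ((eq_connectedComponentIn hx).trans (eq_connectedComponentIn hx').symm)

theorem subsingleton (hS : S.Subsingleton) : Subsingleton (ComponentsIn S) := by
  refine ⟨fun C C' => ?_⟩
  obtain ⟨x, hx⟩ := C.nonempty
  obtain ⟨y, hy⟩ := C'.nonempty
  exact eq_of_mem hx (hS (C'.subset hy) (C.subset hx) ▸ hy)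

end ComponentsIn

section RealComponents

variable {S : Set ℝ}

theorem exists_mem_Ioo_notMem_of_connectedComponentIn_ne {x y : ℝ} (hx : x ∈ S) (hy : y ∈ S)
    (hxy : x ≤ y) (hne : connectedComponentIn S x ≠ connectedComponentIn S y) :
    ∃ e ∈ Ioo x y, e ∉ S := by
  by_contra! h
  have hsub : Icc x y ⊆ S := by
    intro e he
    rcases he.1.eq_or_lt with rfl | hxe
    · exact hx
    rcases he.2.eq_or_lt with rfl | hey
    · exact hy
    exact h e ⟨hxe, hey⟩
  exact hne (connectedComponentIn_eq (isPreconnected_Icc.subset_connectedComponentIn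
    (left_mem_Icc.2 hxy) hsub (right_mem_Icc.2 hxy)))

theorem connectedComponentIn_subset_Ioo {x e e' : ℝ} (he : e ∉ S) (he' : e' ∉ S)
    (hex : e < x) (hxe' : x < e') : connectedComponentIn S x ⊆ Ioo e e' := by
  intro y hy
  have hord := (isPreconnected_connectedComponentIn (F := S) (x := x)).ordConnected
  have hx := mem_connectedComponentIn (connectedComponentIn_nonempty_iff.1 ⟨y, hy⟩)
  constructor
  · by_contra! hye
    exact he (connectedComponentIn_subset S x (hord.out hy hx ⟨hye, hex.le⟩))
  · by_contra! hey
    exact he' (connectedComponentIn_subset S x (hord.out hx hy ⟨hxe'.le, hey⟩))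

theorem enclosedWithZeros_connectedComponentIn {a b δ : ℝ} (hS : S ⊆ Icc a b) {n : ℕ}
    {x : Fin (n + 3) → ℝ} (hx : StrictMono x) (hxS : ∀ i, x i ∈ S)
    (hδ : x (Fin.last _) - x 0 ≤ δ)
    (hne : ∀ i : Fin (n + 2),
      connectedComponentIn S (x i.castSucc) ≠ connectedComponentIn S (x i.succ)) :
    EnclosedWithZeros a b (Icc a b \ S) n δ (connectedComponentIn S (x 1)) := by
  choose e he heS using fun i : Fin (n + 2) =>
    exists_mem_Ioo_notMem_of_connectedComponentIn_ne (hxS _) (hxS _)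
      (hx i.castSucc_lt_succ).le (hne i)
  have he_mono : StrictMono e := fun i j hij =>
    (he i).2.trans ((hx.monotone (Fin.succ_le_castSucc_iff.2 hij)).trans_lt (he j).1)
  have heI : ∀ i, e i ∈ Icc a b := fun i =>
    ⟨(hS (hxS _)).1.trans (he i).1.le, (he i).2.le.trans (hS (hxS _)).2⟩
  have hu : x 0 < e 0 := by simpa using (he 0).1
  have hv : e (Fin.last _) < x (Fin.last _) := by simpa using (he (Fin.last _)).2
  refine ⟨e 0, e (Fin.last _), Icc_subset_Icc (heI 0).1 (heI _).2, by linarith, ?_,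
    e ∘ Fin.castLE (by omega), he_mono.comp (Fin.strictMono_castLE _),
    fun i => ⟨⟨heI _, heS _⟩, he_mono.monotone (Fin.zero_le _),
      he_mono.monotone (Fin.le_last _)⟩⟩
  calc connectedComponentIn S (x 1) ⊆ Ioo (e 0) (e 1) :=
        connectedComponentIn_subset_Ioo (heS 0) (heS 1) (by simpa using (he 0).2)
          (by simpa using (he 1).1)
    _ ⊆ Icc (e 0) (e (Fin.last _)) :=
        Ioo_subset_Icc_self.trans (Icc_subset_Icc_right (he_mono.monotone (Fin.le_last _)))

theorem card_le_of_not_enclosedWithZeros_of_sub_le {a b δ : ℝ} (hS : S ⊆ Icc a b) (n : ℕ)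
    {T : Finset (ComponentsIn S)} (hT : ∀ C ∈ T, ¬ EnclosedWithZeros a b (Icc a b \ S) n δ C.1)
    (p : ComponentsIn S → ℝ) (hp : ∀ C, p C ∈ C.1) (hpδ : ∀ C ∈ T, ∀ C' ∈ T, p C' - p C ≤ δ) :
    #T ≤ n + 2 := by
  classical
  by_contra! hT3
  have hp_inj : Function.Injective p := fun C C' h =>
    ComponentsIn.eq_of_mem (hp C) (h ▸ hp C')
  obtain ⟨R, hRT, hR⟩ := Finset.exists_subset_card_eq (s := T.image p) (n := n + 3)
    (by rw [Finset.card_image_of_injective _ hp_inj]; omega)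
  set x := R.orderEmbOfFin hR
  choose Cx hCxT hCx using fun i => Finset.mem_image.1 (hRT (R.orderEmbOfFin_mem hR i))
  have hcomp : ∀ i, (Cx i).1 = connectedComponentIn S (x i) := fun i =>
    ComponentsIn.eq_connectedComponentIn (hCx i ▸ hp _)
  refine hT (Cx 1) (hCxT 1) ?_
  rw [hcomp]
  refine enclosedWithZeros_connectedComponentIn hS x.strictMono
    (fun i => (Cx i).subset (hCx i ▸ hp _)) ?_ fun i h => ?_
  · rw [← hCx, ← hCx]
    exact hpδ _ (hCxT _) _ (hCxT _)
  · rw [← hcomp, ← hcomp] at h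
    exact (x.strictMono i.castSucc_lt_succ).ne (by rw [← hCx, ← hCx, Subtype.ext h])

theorem card_le_of_not_enclosedWithZeros {a b : ℝ} (hab : a < b) (hS : S ⊆ Icc a b) (n : ℕ)
    {m : ℕ} (hm : 0 < m) (G : Finset (ComponentsIn S))
    (hG : ∀ C ∈ G, ¬ EnclosedWithZeros a b (Icc a b \ S) n ((b - a) / m) C.1) :
    #G ≤ (n + 2) * (m + 1) := by
  classical
  choose p hp using fun C : ComponentsIn S => C.nonempty
  set w := (b - a) / m
  have hw : 0 < w := div_pos (sub_pos.2 hab) (by exact_mod_cast hm)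
  have hpI : ∀ C, p C ∈ Icc a b := fun C => hS (C.subset (hp C))
  let cell : ComponentsIn S → ℕ := fun C => ⌊(p C - a) / w⌋₊
  have hcell : ∀ C ∈ G, cell C ∈ Finset.range (m + 1) := by
    intro C _
    rw [Finset.mem_range, Nat.lt_succ_iff]
    refine Nat.floor_le_of_le ?_
    have hmw : (m : ℝ) * w = b - a := mul_div_cancel₀ _ (by exact_mod_cast hm.ne')
    rw [div_le_iff₀ hw, hmw]
    linarith [(hpI C).2]
  have hfiber : ∀ C ∈ G, ∀ C' ∈ G, cell C = cell C' → p C' - p C ≤ w := by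
    intro C _ C' _ h
    have h1 : (p C' - a) / w < (p C - a) / w + 1 := calc
      (p C' - a) / w < cell C' + 1 := Nat.lt_floor_add_one _
      _ = cell C + 1 := by rw [h]
      _ ≤ (p C - a) / w + 1 := by
        gcongr
        exact Nat.floor_le (div_nonneg (by linarith [(hpI C).1]) hw.le)
    rw [← sub_lt_iff_lt_add', ← sub_div, sub_sub_sub_cancel_right, div_lt_one hw] at h1
    exact h1.le
  calc #G ≤ (n + 2) * #(Finset.range (m + 1)) :=
        Finset.card_le_mul_card_image_of_maps_to hcell _ fun k _ =>
          card_le_of_not_enclosedWithZeros_of_sub_le hS n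
            (fun C hC => hG C (Finset.mem_filter.1 hC).1) p hp fun C hC C' hC' =>
              hfiber C (Finset.mem_filter.1 hC).1 C' (Finset.mem_filter.1 hC').1
                ((Finset.mem_filter.1 hC).2.trans (Finset.mem_filter.1 hC').2.symm)
    _ = (n + 2) * (m + 1) := by rw [Finset.card_range]

end RealComponents

theorem summable_of_card_level_le {ι : Type*} {g : ι → ℝ} {B K r : ℝ} (level : ι → ℕ)
    (hg : 0 ≤ g) (hr : 0 ≤ r) (hr2 : 2 * r < 1) (hgB : ∀ c, g c ≤ B * r ^ level c)
    (hcard : ∀ (j : ℕ) (G : Finset ι), (∀ c ∈ G, level c = j) → (#G : ℝ) ≤ K * 2 ^ j) :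
    Summable g := by
  classical
  set B' := max B 0
  have hB' : 0 ≤ B' := le_max_right _ _
  have hK : 0 ≤ K := by simpa using hcard 0 ∅ (by simp)
  have hgeom := (summable_geometric_of_lt_one (by positivity) hr2).mul_left (K * B')
  refine summable_of_sum_le (c := ∑' j, K * B' * (2 * r) ^ j) hg fun u => ?_
  calc ∑ c ∈ u, g c ≤ ∑ c ∈ u, B' * r ^ level c :=
        Finset.sum_le_sum fun c _ => (hgB c).trans (by gcongr; exact le_max_left _ _)
    _ = ∑ j ∈ u.image level, #{c ∈ u | level c = j} * (B' * r ^ j) := by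
        simp only [Finset.sum_comp (fun j => B' * r ^ j) level, nsmul_eq_mul]
    _ ≤ ∑ j ∈ u.image level, K * B' * (2 * r) ^ j := Finset.sum_le_sum fun j _ => by
        have := hcard j {c ∈ u | level c = j} fun c hc => (Finset.mem_filter.1 hc).2
        calc _ ≤ K * 2 ^ j * (B' * r ^ j) := by gcongr
          _ = _ := by ring
    _ ≤ ∑' j, K * B' * (2 * r) ^ j := hgeom.sum_le_tsum _ fun j _ => by positivity

theorem summable_rpow_of_card_lt_le {ι : Type*} {g : ι → ℝ} {A B K r ε : ℝ}
    (hg : ∀ c, 0 < g c) (hgB : ∀ c, g c ≤ B) (hr : 0 < r) (hε : 0 < ε) (hrε : 2 * r ^ ε < 1)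
    (hcard : ∀ (j : ℕ) (G : Finset ι), (∀ c ∈ G, A * r ^ j < g c) → (#G : ℝ) ≤ K * 2 ^ j) :
    Summable fun c => g c ^ ε := by
  classical
  have hr1 : r < 1 := by
    by_contra! h
    linarith [Real.one_le_rpow h hε.le]
  have hlevel : ∀ c, ∃ j : ℕ, A * r ^ j < g c := fun c =>
    (((tendsto_pow_atTop_nhds_zero_of_lt_one hr.le hr1).const_mul A).eventually
      (gt_mem_nhds (by rw [mul_zero]; exact hg c))).exists
  set B' := max B (A / r)
  have hgB' : ∀ c, g c ≤ B' * r ^ Nat.find (hlevel c) := by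
    intro c
    rcases h : Nat.find (hlevel c) with _ | j
    · rw [pow_zero, mul_one]
      exact (hgB c).trans (le_max_left _ _)
    · have hj : ¬ A * r ^ j < g c := Nat.find_min (hlevel c) (by omega)
      calc g c ≤ A * r ^ j := not_lt.1 hj
        _ = A / r * r ^ (j + 1) := by field_simp; ring
        _ ≤ B' * r ^ (j + 1) := by gcongr; exact le_max_right _ _
  refine summable_of_card_level_le (fun c => Nat.find (hlevel c)) (B := B' ^ ε) (K := K)
    (fun c => (Real.rpow_pos_of_pos (hg c) ε).le) (Real.rpow_nonneg hr.le ε) hrε (fun c => ?_)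
    fun j G hG => hcard j G fun c hc => hG c hc ▸ Nat.find_spec (hlevel c)
  have hB' : 0 ≤ B' := nonneg_of_mul_nonneg_left ((hg c).le.trans (hgB' c)) (pow_pos hr _)
  calc g c ^ ε ≤ (B' * r ^ Nat.find (hlevel c)) ^ ε :=
        Real.rpow_le_rpow (hg c).le (hgB' c) hε.le
    _ = B' ^ ε * (r ^ ε) ^ Nat.find (hlevel c) := by
        rw [Real.mul_rpow hB' (pow_nonneg hr.le _), Real.rpow_pow_comm hr.le]

theorem sSup_image_abs_mem_Ioc {φ : ℝ → ℝ} {s : Set ℝ} {B : ℝ} (hs : s.Nonempty)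
    (hs0 : ∀ x ∈ s, φ x ≠ 0) (hB : ∀ x ∈ s, |φ x| ≤ B) :
    sSup ((fun x => |φ x|) '' s) ∈ Ioc 0 B := by
  obtain ⟨x, hx⟩ := hs
  have hle : ∀ y ∈ (fun x => |φ x|) '' s, y ≤ B := by
    rintro _ ⟨y, hy, rfl⟩
    exact hB y hy
  exact ⟨(abs_pos.2 (hs0 x hx)).trans_le (le_csSup ⟨B, hle⟩ ⟨x, hx, rfl⟩),
    csSup_le ⟨_, x, hx, rfl⟩ hle⟩

theorem two_mul_inv_two_pow_rpow_lt_one {n : ℕ} {ε : ℝ} (hnε : 1 < n * ε) :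
    2 * ((2 : ℝ) ^ n)⁻¹ ^ ε < 1 := by
  rw [Real.inv_rpow (by positivity), ← Real.rpow_natCast, ← Real.rpow_mul (by norm_num),
    mul_inv_lt_iff₀ (by positivity), one_mul]
  simpa using Real.rpow_lt_rpow_of_exponent_lt (by norm_num : (1 : ℝ) < 2) hnε

theorem card_le_of_lt_sSup_image_abs {φ : ℝ → ℝ} {a b B : ℝ} {n : ℕ} (hab : a < b)
    (hφ : ContDiffOn ℝ n φ (Icc a b))
    (hB : ∀ x ∈ Icc a b, |iteratedDerivWithin n φ (Icc a b) x| ≤ B) (j : ℕ)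
    (G : Finset (ComponentsIn (Icc a b \ {y | φ y = 0})))
    (hG : ∀ C ∈ G, B * (b - a) ^ n * ((2 : ℝ) ^ n)⁻¹ ^ j < sSup ((fun x => |φ x|) '' C.1)) :
    (#G : ℝ) ≤ 2 * (n + 2) * 2 ^ j := by
  have hδ : ((b - a) / (2 ^ j : ℕ)) ^ n * B = B * (b - a) ^ n * ((2 : ℝ) ^ n)⁻¹ ^ j := by
    push_cast
    rw [div_pow, inv_pow, ← pow_mul, ← pow_mul, mul_comm n j]
    ring
  have hcount := card_le_of_not_enclosedWithZeros hab sdiff_subset n (Nat.two_pow_pos j) G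
    fun C hC hCenc => (hG C hC).not_ge (hδ ▸ csSup_le (C.nonempty.image _) (by
      rintro _ ⟨x, hx, rfl⟩
      exact abs_le_of_enclosedWithZeros hab hφ hB
        (fun z hz => by_contra fun h => hz.2 ⟨hz.1, h⟩) hCenc hx))
  have : (n + 2) * (2 ^ j + 1) ≤ 2 * (n + 2) * 2 ^ j := by
    nlinarith [Nat.one_le_two_pow (n := j)]
  exact_mod_cast hcount.trans this

/-- Sjölin's theorem (Corollary 2.3): if `φ` is smooth on a compact interval `I = [a,b]`,
`E` is its zero set, and `{I_k}` are the connected components of `I \ E`, then for every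
`ε > 0` the series `∑_k (sup_{I_k} |φ|)^ε` converges. -/
theorem statement2 (a b : ℝ) (hab : a ≤ b) (φ : ℝ → ℝ)
    (hφ : ContDiffOn ℝ (⊤ : ℕ∞) φ (Set.Icc a b)) (ε : ℝ) (hε : 0 < ε) :
    Summable (fun Cc : {C : Set ℝ // ∃ x ∈ Set.Icc a b \ {y | φ y = 0},
        C = connectedComponentIn (Set.Icc a b \ {y | φ y = 0}) x} =>
      (sSup ((fun x => |φ x|) '' (Cc : Set ℝ))) ^ ε) := by
  rcases hab.eq_or_lt with rfl | hab
  · have := ComponentsIn.subsingleton (S := Icc a a \ {y | φ y = 0})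
      ((subsingleton_Icc_of_ge le_rfl).anti sdiff_subset)
    exact Summable.of_finite
  obtain ⟨n, hn⟩ := exists_nat_gt ε⁻¹
  have hφn : ContDiffOn ℝ n φ (Icc a b) := hφ.of_le (by exact_mod_cast le_top)
  obtain ⟨B, hB⟩ := isCompact_Icc.exists_bound_of_continuousOn
    (hφn.continuousOn_iteratedDerivWithin le_rfl (uniqueDiffOn_Icc hab))
  obtain ⟨B₀, hB₀⟩ := isCompact_Icc.exists_bound_of_continuousOn hφ.continuousOn
  simp only [Real.norm_eq_abs] at hB hB₀
  have hsup (C : ComponentsIn (Icc a b \ {y | φ y = 0})) :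
      sSup ((fun x => |φ x|) '' C.1) ∈ Ioc 0 B₀ :=
    sSup_image_abs_mem_Ioc C.nonempty (fun x hx => (C.subset hx).2)
      fun x hx => hB₀ x (C.subset hx).1
  exact summable_rpow_of_card_lt_le (A := B * (b - a) ^ n) (r := (2 ^ n)⁻¹)
    (fun C => (hsup C).1) (fun C => (hsup C).2) (by positivity) hε
    (two_mul_inv_two_pow_rpow_lt_one (by rwa [inv_lt_iff_one_lt_mul₀ hε] at hn))
    (card_le_of_lt_sSup_image_abs hab hφn hB)
end

section
/- Fix C_3 > 0 and let h: [-1,1] -> R be smooth with h(0)=h'(0)=h''(0)=0 and C_3/4 <= h''' <= C_3 on [-1,1]. Let C_0 be a sufficiently large dyadic constant (depending only on C_3), let 0 < epsilon <= 1, let rho > 0 be dyadic, and let delta > 0 be dyadic with delta <= epsilon^{-1} rho^{-2} (up to a fixed constant). Let I_1, I_2 be intervals of length rho with left endpoints j_1 rho and j_2 rho, where C_0/8 < |j_2-j_1| < C_0/2. Let x_1^0, t_2^0 in R, let y_1^0 in I_1, let y_2^0 be the left endpoint of I_2, set U_1 := {(x_1,y_1): 0 <= y_1 - y_1^0 < rho*min(1,delta),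 0 <= x_1 - x_1^0 + epsilon*(h''(y_1^0)/2)(y_1-y_1^0) < epsilon rho^2 delta} and U_2 := {(x_2,y_2): 0 <= y_2 - y_2^0 < rho, 0 <= x_2 - t_2^0 + epsilon*[h'(y_2)-h'(y_1^0)-(h''(y_1^0)/2)(y_2-y_1^0)] < epsilon rho^2 delta}, and set z_1^0 = (x_1^0, y_1^0), z_2^0 = (x_2^0, y_2^0) with x_2^0 := t_2^0 - epsilon*[h'(y_2^0)-h'(y_1^0)-(h''(y_1^0)/2)(y_2^0-y_1^0)]. Assume the admissibility conditions (C_0^2/4) epsilon rho^2 delta <= |t_2^0 - x_1^0| < 4 C_0^2 epsilon rho^2 delta and (C_0^2/512) epsilon rho^2 max(1,delta) <= |tau_{z_2^0}(z_1^0,z_2^0)| < 5 C_0^2 epsilon rho^2 max(1,delta). Then for all (z_1, z_2) in U_1 x U_2 one has (1/8) C_0^2 epsilon rho^2 delta <= |tau_{z_1}(z_1,z_2)| <= 8 C_0^2 epsilon rho^2 delta and (1/1000) C_0^2 epsilon rho^2 max(1,delta) <= |tau_{z_2}(z_1,z_2)| <= 1000 C_0^2 epsilon rho^2 max(1,delta).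 -/
/-!
In the sheared coordinates defining `U₁` and `U₂`, the transversality `τ_{z₁}(z₁, z₂)` differs
from `t₂⁰ - x₁⁰`, and `τ_{z₂}(z₁, z₂)` from `τ_{z₂⁰}(z₁⁰, z₂⁰)`, by the difference of the two
sheared coordinates (at most `ερ²δ`), a Taylor remainder of `h'` and increments of `h''` times
vertical distances. As `|h'''| ≤ C₃` and all vertical distances are `O(C₀ρ)`, the total error is
at most `(1 + C₃)(1 + C₀) ερ²δ`, resp. `(1 + C₃)(1 + C₀) ερ²(1 ∨ δ)`, which is negligible against
`C₀²` times the same scale once `C₀ ≫ C₃`; so the admissibility bounds at the base points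
propagate to all of `U₁ × U₂`.
-/

open Set

noncomputable section

theorem abs_sub_sub_mul_le_of_lipschitz_deriv {f f' : ℝ → ℝ} {s : Set ℝ} {C a b : ℝ}
    (hs : Convex ℝ s) (hC : 0 ≤ C) (hf : ∀ x ∈ s, HasDerivAt f (f' x) x)
    (hf' : ∀ x ∈ s, ∀ y ∈ s, |f' y - f' x| ≤ C * |y - x|) (ha : a ∈ s) (hb : b ∈ s) :
    |f b - f a - f' a * (b - a)| ≤ C * (b - a) ^ 2 := by
  have hab : uIcc a b ⊆ s := hs.ordConnected.uIcc_subset ha hb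
  have key := Convex.norm_image_sub_le_of_norm_hasDerivWithin_le
    (f := fun t => f t - f' a * t) (f' := fun t => f' t - f' a) (C := C * |b - a|)
    (fun x hx => (((hf x (hab hx)).sub ((hasDerivAt_id x).const_mul (f' a))).congr_deriv
      (by ring)).hasDerivWithinAt)
    (fun x hx => (hf' a ha x (hab hx)).trans <|
      mul_le_mul_of_nonneg_left (abs_sub_left_of_mem_uIcc hx) hC)
    (convex_uIcc a b) left_mem_uIcc right_mem_uIcc
  calc |f b - f a - f' a * (b - a)| = |f b - f' a * b - (f a - f' a * a)| := by ring_nf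
    _ ≤ C * |b - a| * |b - a| := key
    _ = C * (b - a) ^ 2 := by rw [mul_assoc, abs_mul_abs_self, sq]

theorem hasDerivAt_deriv_iteratedDeriv_two {h : ℝ → ℝ} (hh : ContDiff ℝ 2 h) (x : ℝ) :
    HasDerivAt (deriv h) (iteratedDeriv 2 h x) x := by
  have hd := hh.differentiable_iteratedDeriv 1 (by norm_num)
  rw [iteratedDeriv_one] at hd
  rw [iteratedDeriv_succ, iteratedDeriv_one]
  exact (hd x).hasDerivAt

theorem abs_iteratedDeriv_two_sub_le {h : ℝ → ℝ} {s : Set ℝ} {C : ℝ} (hh : ContDiff ℝ 3 h)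
    (hs : Convex ℝ s) (h3 : ∀ y ∈ s, |iteratedDeriv 3 h y| ≤ C) :
    ∀ a ∈ s, ∀ b ∈ s, |iteratedDeriv 2 h b - iteratedDeriv 2 h a| ≤ C * |b - a| := by
  intro a ha b hb
  refine hs.norm_image_sub_le_of_norm_deriv_le
    (fun x _ => hh.differentiable_iteratedDeriv 2 (by norm_num) x) (fun x hx => ?_) ha hb
  rw [← iteratedDeriv_succ]
  exact h3 x hx

theorem abs_sub_le_of_mem_Ico_mul {ρ j j' y y' : ℝ} (hy : y ∈ Ico (j * ρ) (j * ρ + ρ))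
    (hy' : y' ∈ Ico (j' * ρ) (j' * ρ + ρ)) : |y' - y| ≤ (|j' - j| + 1) * ρ := by
  have hρ : 0 ≤ ρ := by linarith [hy.1, hy.2]
  have hlo := mul_le_mul_of_nonneg_right (neg_abs_le (j' - j)) hρ
  have hhi := mul_le_mul_of_nonneg_right (le_abs_self (j' - j)) hρ
  rw [abs_le]
  constructor <;> linarith [hy.1, hy.2, hy'.1, hy'.2]

theorem one_add_mul_one_add_le_sq {C C₀ : ℝ} (hC : 0 ≤ C) (hC₀ : 4096 * (1 + C) ≤ C₀) :
    (1 + C) * (1 + C₀) ≤ C₀ ^ 2 / 2048 := by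
  nlinarith

structure TaylorControl (C : ℝ) (h' h'' : ℝ → ℝ) (s : Set ℝ) : Prop where
  lipschitz : ∀ a ∈ s, ∀ b ∈ s, |h'' b - h'' a| ≤ C * |b - a|
  taylor : ∀ a ∈ s, ∀ b ∈ s, |h' b - h' a - h'' a * (b - a)| ≤ C * (b - a) ^ 2

theorem TaylorControl.of_abs_iteratedDeriv_three_le {h : ℝ → ℝ} {s : Set ℝ} {C : ℝ}
    (hh : ContDiff ℝ 3 h) (hs : Convex ℝ s) (hC : 0 ≤ C)
    (h3 : ∀ y ∈ s, |iteratedDeriv 3 h y| ≤ C) :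
    TaylorControl C (deriv h) (iteratedDeriv 2 h) s where
  lipschitz := abs_iteratedDeriv_two_sub_le hh hs h3
  taylor _ ha _ hb := abs_sub_sub_mul_le_of_lipschitz_deriv hs hC
    (fun x _ => hasDerivAt_deriv_iteratedDeriv_two (hh.of_le (by norm_num)) x)
    (abs_iteratedDeriv_two_sub_le hh hs h3) ha hb

section Transversality

variable (ε : ℝ) (h' h'' : ℝ → ℝ)

def transversality (z z₁ z₂ : ℝ × ℝ) : ℝ :=
  z₂.1 - z₁.1 + ε * (h' z₂.2 - h' z₁.2 - 1 / 2 * h'' z.2 * (z₂.2 - z₁.2))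

/- `U₁` (resp. `U₂`) is cut out by a window for `z.2` and by `shearedCoord₁ ε h'' x₁⁰ y₁⁰ z`
(resp. `shearedCoord₂ ε h' h'' t₂⁰ y₁⁰ z`) lying in `[0, ερ²δ)`. -/
def shearedCoord₁ (x₁ y₁ : ℝ) (z : ℝ × ℝ) : ℝ :=
  z.1 - x₁ + ε * (h'' y₁ / 2) * (z.2 - y₁)

def shearedCoord₂ (t₂ y₁ : ℝ) (z : ℝ × ℝ) : ℝ :=
  z.1 - t₂ + ε * (h' z.2 - h' y₁ - h'' y₁ / 2 * (z.2 - y₁))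

variable {ε h' h''} {s : Set ℝ} {C : ℝ}

namespace TaylorControl

theorem abs_mul_remainder_le (hT : TaylorControl C h' h'' s) (hε : 0 ≤ ε) (hC : 0 ≤ C)
    {a b r : ℝ} (ha : a ∈ s) (hb : b ∈ s) (hr : |b - a| ≤ r) :
    |ε * (h' b - h' a - h'' a * (b - a))| ≤ ε * C * r ^ 2 := by
  rw [abs_mul, abs_of_nonneg hε, mul_assoc]
  refine mul_le_mul_of_nonneg_left ((hT.taylor a ha b hb).trans ?_) hε
  rw [← sq_abs]
  gcongr

theorem abs_mul_increment_mul_le (hT : TaylorControl C h' h'' s) (hε : 0 ≤ ε) (hC : 0 ≤ C)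
    {a b u r d : ℝ} (ha : a ∈ s) (hb : b ∈ s) (hr : |b - a| ≤ r) (hu : |u| ≤ d) :
    |ε / 2 * ((h'' b - h'' a) * u)| ≤ ε / 2 * C * r * d := by
  have hr₀ : 0 ≤ r := (abs_nonneg _).trans hr
  have hlip : |h'' b - h'' a| ≤ C * r := (hT.lipschitz a ha b hb).trans (by gcongr)
  calc |ε / 2 * ((h'' b - h'' a) * u)| = ε / 2 * (|h'' b - h'' a| * |u|) := by
        rw [abs_mul, abs_mul, abs_of_nonneg (by positivity)]
    _ ≤ ε / 2 * (C * r * d) := by gcongr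
    _ = ε / 2 * C * r * d := by ring

theorem abs_transversality_fst_sub_le (hT : TaylorControl C h' h'' s) (hε : 0 ≤ ε)
    (hC : 0 ≤ C) {x₁ y₁ t₂ r d : ℝ} {z₁ z₂ : ℝ × ℝ} (hy₁ : y₁ ∈ s) (hz₁ : z₁.2 ∈ s)
    (hr : |z₁.2 - y₁| ≤ r) (hd : |z₂.2 - z₁.2| ≤ d) :
    |transversality ε h' h'' z₁ z₁ z₂ - (t₂ - x₁)| ≤
      |shearedCoord₂ ε h' h'' t₂ y₁ z₂ - shearedCoord₁ ε h'' x₁ y₁ z₁| +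
        ε * C * (r ^ 2 + r * d / 2) := by
  set Δ := shearedCoord₂ ε h' h'' t₂ y₁ z₂ - shearedCoord₁ ε h'' x₁ y₁ z₁
  set R := ε * (h' z₁.2 - h' y₁ - h'' y₁ * (z₁.2 - y₁))
  set L := ε / 2 * ((h'' z₁.2 - h'' y₁) * (z₂.2 - z₁.2))
  have hdecomp : transversality ε h' h'' z₁ z₁ z₂ - (t₂ - x₁) = Δ - R - L := by
    simp only [Δ, R, L, transversality, shearedCoord₁, shearedCoord₂]; ring
  have hR := hT.abs_mul_remainder_le hε hC hy₁ hz₁ hr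
  have hL := hT.abs_mul_increment_mul_le hε hC hy₁ hz₁ hr hd
  rw [hdecomp]
  linarith [abs_sub (Δ - R) L, abs_sub Δ R]

theorem abs_transversality_snd_sub_le (hT : TaylorControl C h' h'' s) (hε : 0 ≤ ε)
    (hC : 0 ≤ C) {x₁ y₁ t₂ r d e : ℝ} {z₁ z₂ w₂ : ℝ × ℝ}
    (hw₂ : shearedCoord₂ ε h' h'' t₂ y₁ w₂ = 0)
    (hy₁ : y₁ ∈ s) (hw : w₂.2 ∈ s) (hz₁ : z₁.2 ∈ s) (hz₂ : z₂.2 ∈ s)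
    (hr : |z₁.2 - y₁| ≤ r) (hd : |z₂.2 - z₁.2| ≤ d) (hd₀ : |w₂.2 - y₁| ≤ d)
    (he : |z₂.2 - w₂.2| ≤ e) (he' : |(z₂.2 - w₂.2) - (z₁.2 - y₁)| ≤ e) :
    |transversality ε h' h'' z₂ z₁ z₂ - transversality ε h' h'' w₂ (x₁, y₁) w₂| ≤
      |shearedCoord₂ ε h' h'' t₂ y₁ z₂ - shearedCoord₁ ε h'' x₁ y₁ z₁| +
        ε * C * (r ^ 2 + d * e) := by
  set Δ := shearedCoord₂ ε h' h'' t₂ y₁ z₂ - shearedCoord₁ ε h'' x₁ y₁ z₁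
  set R := ε * (h' z₁.2 - h' y₁ - h'' y₁ * (z₁.2 - y₁))
  set L := ε / 2 * ((h'' z₂.2 - h'' w₂.2) * (z₂.2 - z₁.2))
  set L₀ := ε / 2 * ((h'' w₂.2 - h'' y₁) * ((z₂.2 - w₂.2) - (z₁.2 - y₁)))
  have hdecomp : transversality ε h' h'' z₂ z₁ z₂ - transversality ε h' h'' w₂ (x₁, y₁) w₂ =
      Δ - R - L - L₀ := by
    simp only [Δ, R, L, L₀, transversality, shearedCoord₁, shearedCoord₂] at hw₂ ⊢
    linear_combination -hw₂
  have hR := hT.abs_mul_remainder_le hε hC hy₁ hz₁ hr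
  have hL := hT.abs_mul_increment_mul_le hε hC hw hz₂ he hd
  have hL₀ := hT.abs_mul_increment_mul_le hε hC hy₁ hw hd₀ he'
  rw [hdecomp]
  linarith [abs_sub (Δ - R - L) L₀, abs_sub (Δ - R) L, abs_sub Δ R]

theorem abs_transversality_fst_sub_le_on_pair (hT : TaylorControl C h' h'' s) (hε : 0 ≤ ε)
    (hC : 0 ≤ C) {x₁ y₁ t₂ ρ δ C₀ : ℝ} {z₁ z₂ : ℝ × ℝ} (hρ : 0 ≤ ρ) (hδ : 0 ≤ δ)
    (hC₀ : 0 ≤ C₀) (hy₁ : y₁ ∈ s) (hz₁ : z₁.2 ∈ s) (hr : z₁.2 - y₁ ∈ Ico 0 (ρ * min 1 δ))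
    (hd : |z₂.2 - z₁.2| ≤ C₀ * ρ)
    (hΔ : |shearedCoord₂ ε h' h'' t₂ y₁ z₂ - shearedCoord₁ ε h'' x₁ y₁ z₁| ≤ ε * ρ ^ 2 * δ) :
    |transversality ε h' h'' z₁ z₁ z₂ - (t₂ - x₁)| ≤
      (1 + C) * (1 + C₀) * (ε * ρ ^ 2 * δ) := by
  set r := ρ * min 1 δ
  have hr₀ : 0 ≤ r := hr.1.trans hr.2.le
  have hrρ : r ≤ ρ := mul_le_of_le_one_right hρ (min_le_left _ _)
  have hrδ : r ≤ ρ * δ := mul_le_mul_of_nonneg_left (min_le_right _ _) hρ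
  have hr2 : r ^ 2 + r * (C₀ * ρ) / 2 ≤ (1 + C₀) * (ρ ^ 2 * δ) := by
    have : 0 ≤ C₀ * (ρ ^ 2 * δ) := by positivity
    nlinarith [mul_le_mul hrρ hrδ hr₀ hρ,
      mul_le_mul_of_nonneg_left hrδ (by positivity : 0 ≤ C₀ * ρ)]
  have hX : 0 ≤ C₀ * (ε * ρ ^ 2 * δ) := by positivity
  calc _ ≤ ε * ρ ^ 2 * δ + ε * C * (r ^ 2 + r * (C₀ * ρ) / 2) :=
        (hT.abs_transversality_fst_sub_le hε hC hy₁ hz₁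
          ((abs_of_nonneg hr.1).trans_le hr.2.le) hd).trans (by gcongr)
    _ ≤ ε * ρ ^ 2 * δ + ε * C * ((1 + C₀) * (ρ ^ 2 * δ)) := by gcongr
    _ ≤ (1 + C) * (1 + C₀) * (ε * ρ ^ 2 * δ) := by linarith

theorem abs_transversality_snd_sub_le_on_pair (hT : TaylorControl C h' h'' s) (hε : 0 ≤ ε)
    (hC : 0 ≤ C) {x₁ y₁ t₂ ρ δ C₀ : ℝ} {z₁ z₂ w₂ : ℝ × ℝ}
    (hw₂ : shearedCoord₂ ε h' h'' t₂ y₁ w₂ = 0) (hρ : 0 ≤ ρ) (hC₀ : 0 ≤ C₀)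
    (hy₁ : y₁ ∈ s) (hw : w₂.2 ∈ s) (hz₁ : z₁.2 ∈ s) (hz₂ : z₂.2 ∈ s)
    (hr : z₁.2 - y₁ ∈ Ico 0 (ρ * min 1 δ)) (he : z₂.2 - w₂.2 ∈ Ico 0 ρ)
    (hd : |z₂.2 - z₁.2| ≤ C₀ * ρ) (hd₀ : |w₂.2 - y₁| ≤ C₀ * ρ)
    (hΔ : |shearedCoord₂ ε h' h'' t₂ y₁ z₂ - shearedCoord₁ ε h'' x₁ y₁ z₁| ≤ ε * ρ ^ 2 * δ) :
    |transversality ε h' h'' z₂ z₁ z₂ - transversality ε h' h'' w₂ (x₁, y₁) w₂| ≤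
      (1 + C) * (1 + C₀) * (ε * ρ ^ 2 * max 1 δ) := by
  have hrρ : ρ * min 1 δ ≤ ρ := mul_le_of_le_one_right hρ (min_le_left _ _)
  have hr' : |z₁.2 - y₁| ≤ ρ := by rw [abs_of_nonneg hr.1]; linarith [hr.2]
  have he' : |(z₂.2 - w₂.2) - (z₁.2 - y₁)| ≤ ρ := by
    rw [abs_le]; constructor <;> linarith [hr.1, hr.2, he.1, he.2]
  have hmax : ε * ρ ^ 2 ≤ ε * ρ ^ 2 * max 1 δ :=
    le_mul_of_one_le_right (by positivity) (le_max_left _ _)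
  have hmaxδ : ε * ρ ^ 2 * δ ≤ ε * ρ ^ 2 * max 1 δ := by gcongr; exact le_max_right _ _
  have hY : 0 ≤ C₀ * (ε * ρ ^ 2 * max 1 δ) := by positivity
  calc _ ≤ ε * ρ ^ 2 * δ + ε * C * (ρ ^ 2 + C₀ * ρ * ρ) :=
        (hT.abs_transversality_snd_sub_le hε hC hw₂ hy₁ hw hz₁ hz₂ hr' hd hd₀
          ((abs_of_nonneg he.1).trans_le he.2.le) he').trans (by gcongr)
    _ = ε * ρ ^ 2 * δ + C * (1 + C₀) * (ε * ρ ^ 2) := by ring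
    _ ≤ (1 + C) * (1 + C₀) * (ε * ρ ^ 2 * max 1 δ) := by
        nlinarith [mul_le_mul_of_nonneg_left hmax (by positivity : 0 ≤ C * (1 + C₀))]

end TaylorControl

end Transversality

/-- Lemma 3.2 (sizes of the transversalities on admissible pairs of type 1): for a
perturbation `h` of coarse cubic type, an admissible pair `(U₁, U₂)` of type 1 at dyadic
scales `δ, ρ` inside an admissible pair of strips (separation `C₀/8 < |j₂-j₁| < C₀/2`), one
has `|τ_{z₁}(z₁,z₂)| ∼₈ C₀² ε ρ² δ` and `|τ_{z₂}(z₁,z₂)| ∼₁₀₀₀ C₀² ε ρ² (1 ∨ δ)` for all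
`(z₁,z₂) ∈ U₁ × U₂`. -/
theorem statement8 (C3 : ℝ) (hC3 : 0 < C3) :
    ∃ K : ℝ, 1 ≤ K ∧
      ∀ (k0 : ℕ) (C0 : ℝ), C0 = 2 ^ k0 → K ≤ C0 →
      ∀ h : ℝ → ℝ, ContDiff ℝ (⊤ : ℕ∞) h →
        h 0 = 0 → deriv h 0 = 0 → iteratedDeriv 2 h 0 = 0 →
        (∀ y ∈ Set.Icc (-1 : ℝ) 1,
          C3 / 4 ≤ iteratedDeriv 3 h y ∧ iteratedDeriv 3 h y ≤ C3) →
      ∀ ε : ℝ, 0 < ε → ε ≤ 1 →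
      ∀ (m n : ℤ) (ρ δ : ℝ), ρ = (2 : ℝ) ^ m → δ = (2 : ℝ) ^ n → δ ≤ (ε * ρ ^ 2)⁻¹ →
      ∀ j1 j2 : ℤ, C0 / 8 < |(j2 : ℝ) - (j1 : ℝ)| → |(j2 : ℝ) - (j1 : ℝ)| < C0 / 2 →
        Set.Ico ((j1 : ℝ) * ρ) ((j1 : ℝ) * ρ + ρ) ⊆ Set.Icc (-1 : ℝ) 1 →
        Set.Ico ((j2 : ℝ) * ρ) ((j2 : ℝ) * ρ + ρ) ⊆ Set.Icc (-1 : ℝ) 1 →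
      ∀ x10 t20 y10 : ℝ, y10 ∈ Set.Ico ((j1 : ℝ) * ρ) ((j1 : ℝ) * ρ + ρ) →
        y10 + ρ * min 1 δ ≤ (j1 : ℝ) * ρ + ρ →
      let y20 : ℝ := (j2 : ℝ) * ρ
      let x20 : ℝ := t20 -
        ε * (deriv h y20 - deriv h y10 - iteratedDeriv 2 h y10 / 2 * (y20 - y10))
      let τ : ℝ × ℝ → ℝ × ℝ → ℝ × ℝ → ℝ := fun z z1 z2 =>
        z2.1 - z1.1 +
          ε * (deriv h z2.2 - deriv h z1.2 - 1 / 2 * iteratedDeriv 2 h z.2 * (z2.2 - z1.2))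
      let U1 : Set (ℝ × ℝ) := {z | 0 ≤ z.2 - y10 ∧ z.2 - y10 < ρ * min 1 δ ∧
        0 ≤ z.1 - x10 + ε * (iteratedDeriv 2 h y10 / 2) * (z.2 - y10) ∧
        z.1 - x10 + ε * (iteratedDeriv 2 h y10 / 2) * (z.2 - y10) < ε * ρ ^ 2 * δ}
      let U2 : Set (ℝ × ℝ) := {z | 0 ≤ z.2 - y20 ∧ z.2 - y20 < ρ ∧
        0 ≤ z.1 - t20 + ε * (deriv h z.2 - deriv h y10 -
          iteratedDeriv 2 h y10 / 2 * (z.2 - y10)) ∧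
        z.1 - t20 + ε * (deriv h z.2 - deriv h y10 -
          iteratedDeriv 2 h y10 / 2 * (z.2 - y10)) < ε * ρ ^ 2 * δ}
      -- admissibility condition (3.14)
      C0 ^ 2 / 4 * (ε * ρ ^ 2 * δ) ≤ |t20 - x10| →
      |t20 - x10| < 4 * C0 ^ 2 * (ε * ρ ^ 2 * δ) →
      -- admissibility condition (3.15)
      C0 ^ 2 / 512 * (ε * ρ ^ 2 * max 1 δ) ≤ |τ (x20, y20) (x10, y10) (x20, y20)| →
      |τ (x20, y20) (x10, y10) (x20, y20)| < 5 * C0 ^ 2 * (ε * ρ ^ 2 * max 1 δ) →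
      -- conclusion
      ∀ z1 ∈ U1, ∀ z2 ∈ U2,
        (1 / 8 * (C0 ^ 2 * (ε * ρ ^ 2 * δ)) ≤ |τ z1 z1 z2| ∧
          |τ z1 z1 z2| ≤ 8 * (C0 ^ 2 * (ε * ρ ^ 2 * δ))) ∧
        (1 / 1000 * (C0 ^ 2 * (ε * ρ ^ 2 * max 1 δ)) ≤ |τ z2 z1 z2| ∧
          |τ z2 z1 z2| ≤ 1000 * (C0 ^ 2 * (ε * ρ ^ 2 * max 1 δ))) := by
  -- `C₀²/2048` fits into both slacks `C₀²/4 - C₀²/8` and `C₀²/512 - C₀²/1000`.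
  refine ⟨4096 * (1 + C3), by linarith, ?_⟩
  intro k0 C0 _ hK h hh _ _ _ h3 ε hε _ m n ρ δ hρ hδ _ j1 j2 _ hj hI1 hI2 x10 t20 y10 hy10
    hy10' y20 x20 τ U1 U2 h14a h14b h15a h15b z1 ⟨hz1, hz1', ha1, ha1'⟩ z2 ⟨hz2, hz2', ha2, ha2'⟩
  have hρ0 : 0 < ρ := hρ ▸ zpow_pos two_pos m
  have hδ0 : 0 < δ := hδ ▸ zpow_pos two_pos n
  have hC0 : 0 ≤ C0 := by linarith
  have hT := TaylorControl.of_abs_iteratedDeriv_three_le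
    (hh.of_le (WithTop.coe_le_coe.2 le_top)) (convex_Icc (-1) 1) hC3.le
    fun y hy => abs_le.2 ⟨by linarith [h3 y hy], (h3 y hy).2⟩
  have hy1 : z1.2 ∈ Ico (j1 * ρ) (j1 * ρ + ρ) := ⟨by linarith [hy10.1], by linarith⟩
  have hy2 : z2.2 ∈ Ico (j2 * ρ) (j2 * ρ + ρ) := ⟨by linarith, by linarith⟩
  have hy20 : y20 ∈ Ico (j2 * ρ) (j2 * ρ + ρ) := ⟨le_rfl, by linarith⟩
  have hsep : (|(j2 : ℝ) - j1| + 1) * ρ ≤ C0 * ρ := by gcongr; linarith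
  have hΔ : |shearedCoord₂ ε (deriv h) (iteratedDeriv 2 h) t20 y10 z2 -
      shearedCoord₁ ε (iteratedDeriv 2 h) x10 y10 z1| ≤ ε * ρ ^ 2 * δ :=
    abs_sub_le_of_nonneg_of_le ha2 ha2'.le ha1 ha1'.le
  have E1 : |τ z1 z1 z2 - (t20 - x10)| ≤ (1 + C3) * (1 + C0) * (ε * ρ ^ 2 * δ) :=
    hT.abs_transversality_fst_sub_le_on_pair hε.le hC3.le hρ0.le hδ0.le hC0 (hI1 hy10)
      (hI1 hy1) ⟨hz1, hz1'⟩ ((abs_sub_le_of_mem_Ico_mul hy1 hy2).trans hsep) hΔ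
  have E2 : |τ z2 z1 z2 - τ (x20, y20) (x10, y10) (x20, y20)| ≤
      (1 + C3) * (1 + C0) * (ε * ρ ^ 2 * max 1 δ) :=
    hT.abs_transversality_snd_sub_le_on_pair hε.le hC3.le
      (by simp only [shearedCoord₂, x20]; ring) hρ0.le hC0 (hI1 hy10) (hI2 hy20) (hI1 hy1)
      (hI2 hy2) ⟨hz1, hz1'⟩ ⟨hz2, hz2'⟩ ((abs_sub_le_of_mem_Ico_mul hy1 hy2).trans hsep)
      ((abs_sub_le_of_mem_Ico_mul hy10 hy20).trans hsep) hΔ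
  have hX : 0 ≤ ε * ρ ^ 2 * δ := by positivity
  have hY : 0 ≤ ε * ρ ^ 2 * max 1 δ := by positivity
  have hM := one_add_mul_one_add_le_sq hC3.le hK
  have F1 := abs_le.1 ((abs_abs_sub_abs_le_abs_sub _ _).trans E1)
  have F2 := abs_le.1 ((abs_abs_sub_abs_le_abs_sub _ _).trans E2)
  refine ⟨⟨?_, ?_⟩, ⟨?_, ?_⟩⟩ <;>
    linarith [mul_le_mul_of_nonneg_right hM hX, mul_le_mul_of_nonneg_right hM hY,
      mul_nonneg (sq_nonneg C0) hX, mul_nonneg (sq_nonneg C0) hY]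
end
end

section
/- Fix C_3 > 0. There exist constants c_0 > 0 and delta_0 > 0 (depending only on C_3) such that the following holds for all 0 < delta <= delta_0. Let F be smooth with F(0)=F'(0)=F''(0)=0 and C_3/4 <= F''' <= C_3 everywhere, let phi^s(x,y) := x*y + F(y)/delta, and let U_1^s := {(x_1,y_1): 0 <= x_1 < c_0^2, 0 <= y_1 < c_0 delta} and U_2^s := {(x_2,y_2): 0 <= x_2 + F'(y_2)/delta - a_bar < c_0^2, 0 <= y_2 - b_bar < c_0}, where 1/4 <= |a_bar| <= 4 and 1/2 <= |b_bar| <= 2. Then for all z_1 in U_1^s, z_2 in U_2^s, and every unit vector omega in R^2 with |omega - (-a_bar, b_bar)/|(-a_bar,b_bar)|| <= c_0, the refined transversalities |TV^s_i(z_1,z_2)| := |det( (grad phi^s(z_1) - grad phi^s(z_2))^T , H phi^s(z_i) omega^T )| / ( sqrt(1+|grad phi^s(z_1)|^2) sqrt(1+|grad phi^s(z_2)|^2) |H phi^s(z_i) omega^T| ) satisfy c <= |TV^s_i(z_1,z_2)| <= C for i = 1, 2, with constants 0 < c <= C depending only on C_3. -/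
open MeasureTheory Set
open scoped ENNReal

noncomputable section

private lemma sqrt_le_of_le_sq' {x a : ℝ} (ha : 0 ≤ a) (h : x ≤ a ^ 2) : Real.sqrt x ≤ a := by
  calc Real.sqrt x ≤ Real.sqrt (a ^ 2) := Real.sqrt_le_sqrt h
    _ = a := Real.sqrt_sq ha

private lemma le_sqrt_of_sq_le' {x a : ℝ} (ha : 0 ≤ a) (h : a ^ 2 ≤ x) : a ≤ Real.sqrt x := by
  calc a = Real.sqrt (a ^ 2) := (Real.sqrt_sq ha).symm
    _ ≤ Real.sqrt x := Real.sqrt_le_sqrt h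

private lemma prod_abs_le {a b A B : ℝ} (ha : |a| ≤ A) (hb : |b| ≤ B) : |a * b| ≤ A * B := by
  rw [abs_mul]
  exact mul_le_mul ha hb (abs_nonneg b) ((abs_nonneg a).trans ha)

private lemma mvtA {f : ℝ → ℝ} (hf : Differentiable ℝ f) {lo hi y : ℝ} (hy : 0 ≤ y)
    (hd : ∀ x ∈ Set.Ioo 0 y, lo ≤ deriv f x ∧ deriv f x ≤ hi) :
    f 0 + lo * y ≤ f y ∧ f y ≤ f 0 + hi * y := by
  rcases eq_or_lt_of_le hy with h | h
  · simp [← h]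
  · obtain ⟨ξ, hξm, hξ⟩ := exists_deriv_eq_slope f h hf.continuous.continuousOn
      (hf.differentiableOn)
    have h2 : deriv f ξ * (y - 0) = f y - f 0 := by
      rw [hξ]; rw [div_mul_cancel₀ _ (by linarith : y - 0 ≠ 0)]
    obtain ⟨hl, hu⟩ := hd ξ hξm
    constructor <;> nlinarith

private lemma mvtB {f : ℝ → ℝ} (hf : Differentiable ℝ f) {lo hi y : ℝ} (hy : y ≤ 0)
    (hd : ∀ x ∈ Set.Ioo y 0, lo ≤ deriv f x ∧ deriv f x ≤ hi) :
    f 0 + hi * y ≤ f y ∧ f y ≤ f 0 + lo * y := by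
  rcases eq_or_lt_of_le hy with h | h
  · simp [h]
  · obtain ⟨ξ, hξm, hξ⟩ := exists_deriv_eq_slope f h hf.continuous.continuousOn
      (hf.differentiableOn)
    have h2 : deriv f ξ * (0 - y) = f 0 - f y := by
      rw [hξ]; rw [div_mul_cancel₀ _ (by linarith : (0:ℝ) - y ≠ 0)]
    obtain ⟨hl, hu⟩ := hd ξ hξm
    constructor <;> nlinarith

private lemma tv_bounds {u1 u2 w1 w2 D1 D2 : ℝ}
    (hD1 : 1 ≤ D1) (hD1' : D1 ≤ 1.01) (hD2 : 1 ≤ D2) (hD2' : D2 ≤ 4.6)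
    (hU : u1 ^ 2 + u2 ^ 2 ≤ 25)
    (hW : 0 < Real.sqrt (w1 ^ 2 + w2 ^ 2))
    (hdet : 1 / 40 * Real.sqrt (w1 ^ 2 + w2 ^ 2) ≤ |u1 * w2 - u2 * w1|) :
    1 / 200 ≤ |u1 * w2 - u2 * w1| / (D1 * D2 * Real.sqrt (w1 ^ 2 + w2 ^ 2)) ∧
      |u1 * w2 - u2 * w1| / (D1 * D2 * Real.sqrt (w1 ^ 2 + w2 ^ 2)) ≤ 10 := by
  set s := Real.sqrt (w1 ^ 2 + w2 ^ 2) with hs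
  have hs2 : s ^ 2 = w1 ^ 2 + w2 ^ 2 := Real.sq_sqrt (by positivity)
  have hD1p : (0:ℝ) < D1 := by linarith
  have hD2p : (0:ℝ) < D2 := by linarith
  have hden : 0 < D1 * D2 * s := mul_pos (mul_pos hD1p hD2p) hW
  have hDD : D1 * D2 ≤ 4.646 := by nlinarith
  have hDD1 : (1:ℝ) ≤ D1 * D2 := by nlinarith
  constructor
  · rw [le_div_iff₀ hden]
    nlinarith [mul_le_mul_of_nonneg_right hDD hW.le]
  · rw [div_le_iff₀ hden]
    have hcs : (u1 * w2 - u2 * w1) ^ 2 ≤ 25 * s ^ 2 := by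
      rw [hs2]
      nlinarith [sq_nonneg (u1 * w1 + u2 * w2), sq_nonneg w1, sq_nonneg w2,
        mul_le_mul_of_nonneg_right hU (show (0:ℝ) ≤ w1 ^ 2 + w2 ^ 2 by positivity)]
    have hd5 : |u1 * w2 - u2 * w1| ≤ 5 * s := by
      have h2 : |u1 * w2 - u2 * w1| = Real.sqrt ((u1 * w2 - u2 * w1) ^ 2) :=
        (Real.sqrt_sq_eq_abs _).symm
      rw [h2]
      exact sqrt_le_of_le_sq' (by positivity) (by nlinarith)
    nlinarith [mul_le_mul_of_nonneg_right hDD1 hW.le]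


private lemma sq_of_sqrt_le {X c : ℝ} (hX : 0 ≤ X) (h : Real.sqrt X ≤ c) : X ≤ c ^ 2 := by
  nlinarith [Real.sq_sqrt hX, Real.sqrt_nonneg X]

private lemma abs_comp_le {a b c : ℝ} (hc : 0 ≤ c) (h : a ^ 2 + b ^ 2 ≤ c ^ 2) :
    |a| ≤ c ∧ |b| ≤ c := by
  constructor <;> refine abs_le.mpr ⟨?_, ?_⟩ <;>
    nlinarith [sq_nonneg a, sq_nonneg b, sq_nonneg (a + c), sq_nonneg (a - c),
      sq_nonneg (b + c), sq_nonneg (b - c)]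

private lemma sq_between {x lo hi : ℝ} (h1 : lo ≤ |x|) (h2 : |x| ≤ hi) (hlo : 0 ≤ lo) :
    lo ^ 2 ≤ x ^ 2 ∧ x ^ 2 ≤ hi ^ 2 := by
  constructor <;> nlinarith [sq_abs x, abs_nonneg x]

private lemma sum_sq_le25 {a b : ℝ} (ha : |a| ≤ 2.1) (hb : |b| ≤ 4.1) : a ^ 2 + b ^ 2 ≤ 25 := by
  nlinarith [sq_abs a, sq_abs b, abs_nonneg a, abs_nonneg b]

private lemma aux_D2 {a b : ℝ} (ha : |a| ≤ 2.001) (hb : |b| ≤ 4.001) :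
    1 + (a ^ 2 + b ^ 2) ≤ 4.6 ^ 2 := by
  nlinarith [sq_abs a, sq_abs b, abs_nonneg a, abs_nonneg b]

private lemma aux_Wpos {ω1 ω2 t : ℝ} (h : 0.11 ≤ |ω2|) :
    0 < Real.sqrt (ω2 ^ 2 + (ω1 + t * ω2) ^ 2) :=
  Real.sqrt_pos.mpr (by nlinarith [sq_abs ω2, sq_nonneg (ω1 + t * ω2), abs_nonneg ω2])

private lemma aux_W1 {ω1 ω2 m : ℝ} (hω : ω1 ^ 2 + ω2 ^ 2 = 1) (hm : |m| ≤ 1 / 1000)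
    (h1 : |ω1| ≤ 1) (h2 : |ω2| ≤ 1) : ω2 ^ 2 + (ω1 + m * ω2) ^ 2 ≤ 1.01 ^ 2 := by
  have ha := prod_abs_le hm (prod_abs_le h1 h2)
  have hb := prod_abs_le hm h2
  nlinarith [hω, le_abs_self (m * (ω1 * ω2)), neg_abs_le (m * (ω1 * ω2)), ha,
    sq_abs (m * ω2), hb, abs_nonneg (m * ω2)]

private lemma aux_P {x y r : ℝ} (hx : 1 / 4 ≤ x) (hy : 1 / 2 ≤ y) (hr : r ≤ 4.48) :
    1 / 40 * r ≤ x * y := by nlinarith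

private lemma aux_W2p {ω1 ω2 M : ℝ} (hω : ω1 ^ 2 + ω2 ^ 2 = 1) (hM : 0 ≤ M) :
    ω2 ^ 2 + (ω1 + M * ω2) ^ 2 ≤ (2 + M) ^ 2 := by
  nlinarith [sq_nonneg (ω1 - ω2), sq_nonneg (ω1 + ω2), sq_nonneg (M * ω1), sq_nonneg M]

private lemma aux_W2n {ω1 ω2 M : ℝ} (hω : ω1 ^ 2 + ω2 ^ 2 = 1) (hM : M ≤ 0) :
    ω2 ^ 2 + (ω1 + M * ω2) ^ 2 ≤ (2 - M) ^ 2 := by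
  nlinarith [sq_nonneg (ω1 - ω2), sq_nonneg (ω1 + ω2), sq_nonneg (M * ω1), sq_nonneg M]

set_option maxHeartbeats 2000000 in
/-- Lemma 3.6: for the rescaled phase `φˢ(x,y) = xy + F(y)/δ` (with `F` of coarse cubic
type) and the rescaled prototypical patches `U₁ˢ, U₂ˢ`, the refined transversalities
`TVˢ_i(z₁,z₂)`, computed with any unit vector `ω` close to the tangent direction
`(-ā, b̄)/|(-ā, b̄)|` of the intersection curve, are of size `∼ 1`, uniformly in `δ`. -/
theorem statement11 (C3 : ℝ) (hC3 : 0 < C3) :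
    ∃ c0 δ0 c C : ℝ, 0 < c0 ∧ 0 < δ0 ∧ 0 < c ∧ c ≤ C ∧
      ∀ δ : ℝ, 0 < δ → δ ≤ δ0 →
      ∀ F : ℝ → ℝ, ContDiff ℝ (⊤ : ℕ∞) F →
        F 0 = 0 → deriv F 0 = 0 → iteratedDeriv 2 F 0 = 0 →
        (∀ y : ℝ, C3 / 4 ≤ iteratedDeriv 3 F y ∧ iteratedDeriv 3 F y ≤ C3) →
      ∀ abar bbar : ℝ, 1 / 4 ≤ |abar| → |abar| ≤ 4 → 1 / 2 ≤ |bbar| → |bbar| ≤ 2 →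
      ∀ z1 ∈ {z : ℝ × ℝ | 0 ≤ z.1 ∧ z.1 < c0 ^ 2 ∧ 0 ≤ z.2 ∧ z.2 < c0 * δ},
      ∀ z2 ∈ {z : ℝ × ℝ | 0 ≤ z.1 + deriv F z.2 / δ - abar ∧
          z.1 + deriv F z.2 / δ - abar < c0 ^ 2 ∧ 0 ≤ z.2 - bbar ∧ z.2 - bbar < c0},
      ∀ ω : ℝ × ℝ, ω.1 ^ 2 + ω.2 ^ 2 = 1 →
        Real.sqrt ((ω.1 - -abar / Real.sqrt (abar ^ 2 + bbar ^ 2)) ^ 2 +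
          (ω.2 - bbar / Real.sqrt (abar ^ 2 + bbar ^ 2)) ^ 2) ≤ c0 →
      -- gradient of φˢ, the difference of gradients, and the columns `Hφˢ(z_i) ωᵀ`
      let grad : ℝ × ℝ → ℝ × ℝ := fun z => (z.2, z.1 + deriv F z.2 / δ)
      let u : ℝ × ℝ := ((grad z1).1 - (grad z2).1, (grad z1).2 - (grad z2).2)
      let Hω : ℝ × ℝ → ℝ × ℝ := fun z => (ω.2, ω.1 + iteratedDeriv 2 F z.2 / δ * ω.2)
      -- the refined transversality TVˢ_i(z₁,z₂)
      let TV : ℝ × ℝ → ℝ := fun w =>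
        |u.1 * w.2 - u.2 * w.1| /
          (Real.sqrt (1 + ((grad z1).1 ^ 2 + (grad z1).2 ^ 2)) *
            Real.sqrt (1 + ((grad z2).1 ^ 2 + (grad z2).2 ^ 2)) *
            Real.sqrt (w.1 ^ 2 + w.2 ^ 2))
      (c ≤ TV (Hω z1) ∧ TV (Hω z1) ≤ C) ∧ (c ≤ TV (Hω z2) ∧ TV (Hω z2) ≤ C) := by
  refine ⟨1 / (1000 * (1 + C3)), min 1 (C3 / 12800), 1 / 200, 10,
    by positivity, by positivity, by norm_num, by norm_num, ?_⟩
  intro δ hδ hδ0 F hF hF0 hF1 hF2 hF3 abar bbar ha1 ha2 hb1 hb2 z1 hz1 z2 hz2 ω hω hωc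
  set c0 : ℝ := 1 / (1000 * (1 + C3)) with hc0def
  have hc0pos : 0 < c0 := by positivity
  have hc0le : c0 ≤ 1 / 1000 := by
    rw [hc0def, div_le_div_iff₀ (by positivity) (by norm_num)]
    linarith
  have hC3c0 : C3 * c0 ≤ 1 / 1000 := by
    rw [hc0def, mul_one_div, div_le_div_iff₀ (by positivity) (by norm_num)]
    linarith
  have hδ1 : δ ≤ 1 := le_trans hδ0 (min_le_left _ _)
  have hδC3 : 12800 * δ ≤ C3 := by
    have h := le_trans hδ0 (min_le_right _ _)
    rw [le_div_iff₀ (by norm_num : (0:ℝ) < 12800)] at h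
    linarith
  -- smoothness bookkeeping
  have h1 := contDiff_infty_iff_deriv.mp hF
  have h2 := contDiff_infty_iff_deriv.mp h1.2
  have h3 := contDiff_infty_iff_deriv.mp h2.2
  have hdF' : Differentiable ℝ (deriv F) := h2.1
  have hdF'' : Differentiable ℝ (deriv (deriv F)) := h3.1
  have h2eq : iteratedDeriv 2 F = deriv (deriv F) := by
    rw [show (2:ℕ) = 1 + 1 from rfl, iteratedDeriv_succ, iteratedDeriv_one]
  have h3eq : iteratedDeriv 3 F = deriv (deriv (deriv F)) := by
    rw [show (3:ℕ) = 2 + 1 from rfl, iteratedDeriv_succ, h2eq]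
  have hk : ∀ x : ℝ, C3 / 4 ≤ deriv (deriv (deriv F)) x ∧ deriv (deriv (deriv F)) x ≤ C3 :=
    fun x => h3eq ▸ hF3 x
  have hF2' : deriv (deriv F) 0 = 0 := h2eq ▸ hF2
  -- second-derivative bounds
  have hg2 : ∀ y : ℝ, 0 ≤ y → C3 / 4 * y ≤ deriv (deriv F) y ∧ deriv (deriv F) y ≤ C3 * y := by
    intro y hy
    have h := mvtA hdF'' hy (fun x _ => hk x)
    rw [hF2'] at h
    constructor <;> linarith [h.1, h.2]
  have hg2n : ∀ y : ℝ, y ≤ 0 → C3 * y ≤ deriv (deriv F) y ∧ deriv (deriv F) y ≤ C3 / 4 * y := by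
    intro y hy
    have h := mvtB hdF'' hy (fun x _ => hk x)
    rw [hF2'] at h
    constructor <;> linarith [h.1, h.2]
  -- first-derivative bounds on [0, ∞)
  have hg1 : ∀ y : ℝ, 0 ≤ y → 0 ≤ deriv F y ∧ deriv F y ≤ C3 * y * y := by
    intro y hy
    have h := mvtA hdF' (lo := 0) (hi := C3 * y) hy (fun x hx => by
      obtain ⟨hx1, hx2⟩ := hg2 x hx.1.le
      constructor
      · linarith [mul_nonneg hC3.le hx.1.le]
      · linarith [mul_nonneg hC3.le (show (0:ℝ) ≤ y - x by linarith [hx.2.le])])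
    rw [hF1] at h
    constructor <;> linarith [h.1, h.2]
  clear hF h1 h2 h3 hF0 hF2 hF3 hF2' hk hdF' hdF''
  -- destructure
  obtain ⟨x1, y1⟩ := z1
  obtain ⟨x2, y2⟩ := z2
  obtain ⟨ω1, ω2⟩ := ω
  simp only [Set.mem_setOf_eq] at hz1 hz2
  dsimp only at hz1 hz2 hω hωc ⊢
  rw [h2eq]
  obtain ⟨hx1a, hx1b, hy1a, hy1b⟩ := hz1
  obtain ⟨hG2a, hG2b, hy2a, hy2b⟩ := hz2
  set r := Real.sqrt (abar ^ 2 + bbar ^ 2) with hrdef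
  set A := x1 + deriv F y1 / δ with hAdef
  set B := x2 + deriv F y2 / δ with hBdef
  set m := deriv (deriv F) y1 / δ with hmdef
  set M := deriv (deriv F) y2 / δ with hMdef
  set v1 := -abar / r with hv1def
  set v2 := bbar / r with hv2def
  clear_value v2 v1 M m B A r c0
  -- scalar bounds
  have habar := abs_le.mp ha2
  have hbbar := abs_le.mp hb2
  obtain ⟨habsq', habsq⟩ := sq_between ha1 ha2 (by norm_num)
  obtain ⟨hbbsq', hbbsq⟩ := sq_between hb1 hb2 (by norm_num)
  have hr0 : (0:ℝ) ≤ r := by rw [hrdef]; exact Real.sqrt_nonneg _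
  have hr2 : r ^ 2 = abar ^ 2 + bbar ^ 2 := by rw [hrdef]; exact Real.sq_sqrt (by positivity)
  have hrpos : 0 < r := by rw [hrdef]; exact Real.sqrt_pos.mpr (by linarith [habsq', sq_nonneg bbar])
  have hrle : r ≤ 4.48 := by
    rw [hrdef]; exact sqrt_le_of_le_sq' (by norm_num) (by linarith [habsq, hbbsq])
  -- ω bounds
  obtain ⟨hω1b, hω2b⟩ := abs_comp_le (a := ω1) (b := ω2) (c := 1) (by norm_num)
    (by rw [one_pow]; exact hω.le)
  obtain ⟨he1, he2⟩ := abs_comp_le hc0pos.le (sq_of_sqrt_le (by positivity) hωc)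
  have hv2lb : 1 / 9 ≤ |v2| := by
    rw [hv2def, abs_div, abs_of_pos hrpos, le_div_iff₀ hrpos]
    linarith [hrle, hb1]
  have hω2lb : 0.11 ≤ |ω2| := by
    have h := abs_sub_abs_le_abs_sub v2 ω2
    rw [abs_sub_comm] at h
    linarith [he2, hv2lb, hc0le]
  -- y1, A bounds
  have hcδ : c0 * δ ≤ c0 := by
    have := mul_le_mul_of_nonneg_left hδ1 hc0pos.le; linarith
  have hy1c : y1 ≤ 1 / 1000 := by linarith [hy1b, hcδ, hc0le]
  have hgy1 := hg1 y1 hy1a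
  have hA1 : 0 ≤ deriv F y1 / δ := div_nonneg hgy1.1 hδ.le
  have hA2 : deriv F y1 / δ ≤ c0 / 1000 := by
    rw [div_le_iff₀ hδ]
    have t1 : y1 * y1 ≤ (c0 * δ) * (c0 * δ) :=
      mul_le_mul hy1b.le hy1b.le hy1a (by positivity)
    have t2 : C3 * (y1 * y1) ≤ C3 * ((c0 * δ) * (c0 * δ)) :=
      mul_le_mul_of_nonneg_left t1 hC3.le
    have t3 : (C3 * c0) * (c0 * (δ * δ)) ≤ (1 / 1000) * (c0 * (δ * δ)) :=
      mul_le_mul_of_nonneg_right hC3c0 (by positivity)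
    have t4 : c0 * (δ * δ) ≤ c0 * δ := by
      have := mul_le_mul_of_nonneg_left hδ1 (mul_nonneg hc0pos.le hδ.le)
      linarith [this]
    linarith [hgy1.2, t2, t3, t4]
  have hApos : 0 ≤ A := by rw [hAdef]; exact add_nonneg hx1a hA1
  have hc0sq : c0 * c0 ≤ c0 / 1000 := by
    have := mul_le_mul_of_nonneg_left hc0le hc0pos.le; linarith
  have hAub2 : A ≤ c0 ^ 2 + c0 / 1000 := by rw [hAdef]; linarith [hx1b, hA2]
  have hAub : A ≤ 1 / 100 := by linarith [hAub2, hc0sq, hc0le, hc0pos]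
  -- B, y2 bounds
  have hBlb : abar ≤ B := by linarith
  have hBub : B ≤ abar + c0 ^ 2 := by linarith
  have hBabs : |B| ≤ 4.001 := abs_le.mpr
    ⟨by linarith [hc0sq, hc0le, hc0pos, habar.1], by linarith [hc0sq, hc0le, hc0pos, habar.2]⟩
  have hy2lb' : bbar ≤ y2 := by linarith
  have hy2ub' : y2 ≤ bbar + c0 := by linarith
  have hy2abs : |y2| ≤ 2.001 := abs_le.mpr
    ⟨by linarith [hbbar.1, hc0pos.le], by linarith [hbbar.2, hc0le]⟩
  -- u bounds
  have hu1c : |y1 - y2 + bbar| ≤ 2 * c0 := abs_le.mpr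
    ⟨by linarith [hc0pos.le, hy1a, hy2b], by linarith [hy1b, hcδ, hc0pos.le, hy2a]⟩
  have hu1abs : |y1 - y2| ≤ 2.1 := by
    have t := abs_le.mp hu1c
    exact abs_le.mpr ⟨by linarith [hbbar.1, hc0le, t.1], by linarith [hbbar.2, hc0le, t.2]⟩
  have hu2c : |A - B + abar| ≤ c0 := abs_le.mpr
    ⟨by linarith [hApos, hG2b, hc0sq, hc0le, hc0pos],
     by linarith [hAub2, hG2a, hc0sq, hc0le, hc0pos]⟩
  have hu2abs : |A - B| ≤ 4.1 := by
    have t := abs_le.mp hu2c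
    exact abs_le.mpr ⟨by linarith [habar.1, hc0le, t.1], by linarith [habar.2, hc0le, t.2]⟩
  have hU25 : (y1 - y2) ^ 2 + (A - B) ^ 2 ≤ 25 := sum_sq_le25 hu1abs hu2abs
  -- m bounds
  have hm0 : 0 ≤ m := by
    rw [hmdef]
    exact div_nonneg (by linarith [(hg2 y1 hy1a).1, mul_nonneg hC3.le hy1a]) hδ.le
  have hm1 : m ≤ 1 / 1000 := by
    rw [hmdef, div_le_iff₀ hδ]
    have t6 : C3 * y1 ≤ C3 * (c0 * δ) := mul_le_mul_of_nonneg_left hy1b.le hC3.le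
    have t7 : (C3 * c0) * δ ≤ (1 / 1000) * δ := mul_le_mul_of_nonneg_right hC3c0 hδ.le
    linarith [(hg2 y1 hy1a).2, t6, t7]
  have hmabs : |m| ≤ 1 / 1000 := abs_le.mpr ⟨by linarith, hm1⟩
  -- D bounds
  have hD1a : 1 ≤ Real.sqrt (1 + (y1 ^ 2 + A ^ 2)) :=
    le_sqrt_of_sq_le' (by norm_num) (by linarith [sq_nonneg y1, sq_nonneg A])
  have hD1b : Real.sqrt (1 + (y1 ^ 2 + A ^ 2)) ≤ 1.01 := by
    apply sqrt_le_of_le_sq' (by norm_num)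
    have t8 : y1 * y1 ≤ y1 * (1 / 1000) := mul_le_mul_of_nonneg_left hy1c hy1a
    have t9 : A * A ≤ A * (1 / 100) := mul_le_mul_of_nonneg_left hAub hApos
    linarith [t8, t9, hy1c, hAub]
  have hD2a : 1 ≤ Real.sqrt (1 + (y2 ^ 2 + B ^ 2)) :=
    le_sqrt_of_sq_le' (by norm_num) (by linarith [sq_nonneg y2, sq_nonneg B])
  have hD2b : Real.sqrt (1 + (y2 ^ 2 + B ^ 2)) ≤ 4.6 :=
    sqrt_le_of_le_sq' (by norm_num) (aux_D2 hy2abs hBabs)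
  -- case 1 : W bound
  have hW1le : Real.sqrt (ω2 ^ 2 + (ω1 + m * ω2) ^ 2) ≤ 1.01 :=
    sqrt_le_of_le_sq' (by norm_num) (aux_W1 hω hmabs hω1b hω2b)
  -- main term
  have hbv1 : bbar * v1 = -(abar * v2) := by rw [hv1def, hv2def]; ring
  have hPabs : 1 / 40 ≤ |abar * v2| := by
    rw [hv2def, show abar * (bbar / r) = abar * bbar / r by ring, abs_div,
      abs_of_pos hrpos, le_div_iff₀ hrpos, abs_mul]
    exact aux_P ha1 hb1 hrle
  have hbv2 : 1 / 18 ≤ bbar * v2 := by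
    rw [hv2def, show bbar * (bbar / r) = bbar ^ 2 / r by ring, le_div_iff₀ hrpos]
    linarith [hbbsq', hrle]
  have hq : (y1 - y2) * ω2 ≤ -(1 / 20) := by
    have hkey : (y1 - y2) * ω2 = -(bbar * v2) + ((y1 - y2 + bbar) * ω2 - bbar * (ω2 - v2)) := by
      ring
    have h1 := prod_abs_le hu1c hω2b
    have h2 := prod_abs_le hb2 he2
    linarith [le_abs_self ((y1 - y2 + bbar) * ω2), neg_abs_le ((y1 - y2 + bbar) * ω2),
      le_abs_self (bbar * (ω2 - v2)), neg_abs_le (bbar * (ω2 - v2)), hbv2, hc0le,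
      hkey.le, hkey.ge]
  -- case 1 det bound
  have hdet1 : 1 / 40 * Real.sqrt (ω2 ^ 2 + (ω1 + m * ω2) ^ 2) ≤
      |(y1 - y2) * (ω1 + m * ω2) - (A - B) * ω2| := by
    have hkey : (y1 - y2) * (ω1 + m * ω2) - (A - B) * ω2 - 2 * (abar * v2) =
        (y1 - y2 + bbar) * ω1 - bbar * (ω1 - v1) + m * ((y1 - y2) * ω2) -
          (A - B + abar) * ω2 + abar * (ω2 - v2) := by
      linear_combination -hbv1
    have hT1 := prod_abs_le hu1c hω1b
    have hT2 := prod_abs_le hb2 he1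
    have hT3 := prod_abs_le hmabs (prod_abs_le hu1abs hω2b)
    have hT4 := prod_abs_le hu2c hω2b
    have hT5 := prod_abs_le ha2 he2
    have herr : |(y1 - y2) * (ω1 + m * ω2) - (A - B) * ω2 - 2 * (abar * v2)| ≤ 3 / 200 := by
      rw [hkey]
      refine abs_le.mpr ⟨?_, ?_⟩ <;>
        linarith [le_abs_self ((y1 - y2 + bbar) * ω1), neg_abs_le ((y1 - y2 + bbar) * ω1),
          le_abs_self (bbar * (ω1 - v1)), neg_abs_le (bbar * (ω1 - v1)),
          le_abs_self (m * ((y1 - y2) * ω2)), neg_abs_le (m * ((y1 - y2) * ω2)),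
          le_abs_self ((A - B + abar) * ω2), neg_abs_le ((A - B + abar) * ω2),
          le_abs_self (abar * (ω2 - v2)), neg_abs_le (abar * (ω2 - v2)), hc0le]
    have h2P : 1 / 20 ≤ |2 * (abar * v2)| := by
      rw [abs_mul, abs_two]; linarith [hPabs]
    have habsD : 7 / 200 ≤ |(y1 - y2) * (ω1 + m * ω2) - (A - B) * ω2| := by
      have t := abs_sub_abs_le_abs_sub (2 * (abar * v2))
        ((y1 - y2) * (ω1 + m * ω2) - (A - B) * ω2)
      rw [abs_sub_comm (2 * (abar * v2)) ((y1 - y2) * (ω1 + m * ω2) - (A - B) * ω2)] at t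
      linarith [herr, h2P, t]
    linarith [hW1le, Real.sqrt_nonneg (ω2 ^ 2 + (ω1 + m * ω2) ^ 2)]
  -- case 2
  have hE := abs_le.mp (show |(y1 - y2) * ω1 - (A - B) * ω2| ≤ 6.2 from by
    have h1 := prod_abs_le hu1abs hω1b
    have h2 := prod_abs_le hu2abs hω2b
    calc |(y1 - y2) * ω1 - (A - B) * ω2| ≤ |(y1 - y2) * ω1| + |(A - B) * ω2| := abs_sub _ _
      _ ≤ 6.2 := by linarith)
  have hMcase : 1500 ≤ M ∨ M ≤ -1500 := by
    rcases le_abs.mp hb1 with hbs | hbs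
    · left
      have hy2pos : (0:ℝ) ≤ y2 := by linarith
      have hdd := (hg2 y2 hy2pos).1
      rw [hMdef, le_div_iff₀ hδ]
      linarith [hdd, mul_nonneg (show (0:ℝ) ≤ y2 - 1 / 2 by linarith) hC3.le, hδC3]
    · right
      have hy2u : y2 ≤ -(499 / 1000) := by linarith [hy2ub', hc0le]
      have hy2neg : y2 ≤ 0 := by linarith
      have hdd := (hg2n y2 hy2neg).2
      rw [hMdef, div_le_iff₀ hδ]
      linarith [hdd, mul_nonneg hC3.le (show (0:ℝ) ≤ -(499 / 1000) - y2 by linarith), hδC3, hδ.le]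
  have hdet2 : 1 / 40 * Real.sqrt (ω2 ^ 2 + (ω1 + M * ω2) ^ 2) ≤
      |(y1 - y2) * (ω1 + M * ω2) - (A - B) * ω2| := by
    have hkey : (y1 - y2) * (ω1 + M * ω2) - (A - B) * ω2 =
        M * ((y1 - y2) * ω2) + ((y1 - y2) * ω1 - (A - B) * ω2) := by ring
    rcases hMcase with hM | hM
    · have hW2le : Real.sqrt (ω2 ^ 2 + (ω1 + M * ω2) ^ 2) ≤ 2 + M :=
        sqrt_le_of_le_sq' (by linarith) (aux_W2p hω (by linarith))
      have hMq : M * ((y1 - y2) * ω2) ≤ M * (-(1 / 20)) :=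
        mul_le_mul_of_nonneg_left hq (by linarith)
      have hDle : (y1 - y2) * (ω1 + M * ω2) - (A - B) * ω2 ≤ -(1 / 40) * (2 + M) := by
        rw [hkey]; linarith [hE.2, hMq]
      have t := neg_abs_le ((y1 - y2) * (ω1 + M * ω2) - (A - B) * ω2)
      linarith [hW2le, hDle, t, Real.sqrt_nonneg (ω2 ^ 2 + (ω1 + M * ω2) ^ 2)]
    · have hW2le : Real.sqrt (ω2 ^ 2 + (ω1 + M * ω2) ^ 2) ≤ 2 - M :=
        sqrt_le_of_le_sq' (by linarith) (aux_W2n hω (by linarith))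
      have hMq : M * (-(1 / 20)) ≤ M * ((y1 - y2) * ω2) :=
        mul_le_mul_of_nonpos_left hq (by linarith)
      have hDge : (1 / 40) * (2 - M) ≤ (y1 - y2) * (ω1 + M * ω2) - (A - B) * ω2 := by
        rw [hkey]; linarith [hE.1, hMq]
      have t := le_abs_self ((y1 - y2) * (ω1 + M * ω2) - (A - B) * ω2)
      linarith [hW2le, hDge, t, Real.sqrt_nonneg (ω2 ^ 2 + (ω1 + M * ω2) ^ 2)]
  exact ⟨tv_bounds hD1a hD1b hD2a hD2b hU25 (aux_Wpos hω2lb) hdet1,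
    tv_bounds hD1a hD1b hD2a hD2b hU25 (aux_Wpos hω2lb) hdet2⟩
end
end

section
/- There is an absolute constant C such that for every R > 0, \int_{R^3} (1 + |(x,y)|/R)^{-2} (1 + |(y,z)|/R)^{-2} dx dy dz <= C R^3, where |(u,v)| denotes the Euclidean norm of (u,v) in R^2. Consequently, if two functions p_1, p_2 on R^3 satisfy |p_i(w)| <= R^{-1}(1 + dist(w, T_i)/R)^{-2} for tubes T_1 parallel to the z-axis and T_2 parallel to the x-axis, each of radius R and passing through the origin, then \int_{R^3} |p_1 p_2| <= C' R for an absolute constant C'. -/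
/-!
Since `(1 + t/R)² ≥ 1 + (t/R)²`, the weight `(1 + |(a, b)|/R)⁻²` is at most the Cauchy kernel
`R² / (R² + b² + a²)` in `a`, whose integral is `π R² / √(R² + b²)`. By Tonelli, integrating out
`x` and `z` leaves `∫ π² R⁴ / (R² + y²) dy = π³ R³`.

For the wave packets: `w ↦ (w i, w j)` is `1`-Lipschitz into `ℝ²`, so
`|(w i, w j)| ≤ dist(w, T) + R` for the tube `T`, and each packet is bounded by `4 R⁻¹` times the
weight above.
-/

open MeasureTheory Set Real
open scoped ENNReal

noncomputable section

theorem integral_inv_add_sq {c : ℝ} (hc : 0 < c) : ∫ x : ℝ, (c + x ^ 2)⁻¹ = π / √c := by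
  have hsc : 0 < √c := Real.sqrt_pos.2 hc
  have hscale : ∀ x : ℝ, (c + x ^ 2)⁻¹ = c⁻¹ * (1 + (x / √c) ^ 2)⁻¹ := fun x => by
    rw [div_pow, Real.sq_sqrt hc.le]; field_simp
  simp_rw [hscale]
  rw [integral_const_mul, Measure.integral_comp_div (fun x : ℝ => (1 + x ^ 2)⁻¹),
    integral_univ_inv_one_add_sq, abs_of_pos hsc, smul_eq_mul]
  nth_rw 1 [← Real.sq_sqrt hc.le]
  field_simp

theorem integrable_inv_add_sq {c : ℝ} (hc : 0 < c) : Integrable fun x : ℝ => (c + x ^ 2)⁻¹ := by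
  have hsc : 0 < √c := Real.sqrt_pos.2 hc
  refine ((integrable_inv_one_add_sq.comp_div hsc.ne').const_mul c⁻¹).congr
    (ae_of_all _ fun x => ?_)
  dsimp only
  rw [div_pow, Real.sq_sqrt hc.le]; field_simp

theorem lintegral_ofReal_mul_inv_add_sq {a c : ℝ} (ha : 0 ≤ a) (hc : 0 < c) :
    ∫⁻ x : ℝ, ENNReal.ofReal (a * (c + x ^ 2)⁻¹) = ENNReal.ofReal (a * (π / √c)) := by
  rw [← ofReal_integral_eq_lintegral_ofReal ((integrable_inv_add_sq hc).const_mul a)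
    (ae_of_all _ fun x => by positivity), integral_const_mul, integral_inv_add_sq hc]

theorem lintegral_prod_prod_mul {α β γ : Type*} [MeasurableSpace α] [MeasurableSpace β]
    [MeasurableSpace γ] {μ : Measure α} {ν : Measure β} {ρ : Measure γ} [SFinite μ] [SFinite ν]
    [SFinite ρ] {f : α → β → ℝ≥0∞} {g : β → γ → ℝ≥0∞} (hf : Measurable (Function.uncurry f))
    (hg : Measurable (Function.uncurry g)) :
    ∫⁻ p, f p.1 p.2.1 * g p.2.1 p.2.2 ∂μ.prod (ν.prod ρ) =
      ∫⁻ y, (∫⁻ x, f x y ∂μ) * ∫⁻ z, g y z ∂ρ ∂ν := by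
  have hF : Measurable fun y => ∫⁻ x, f x y ∂μ := hf.lintegral_prod_left'
  have hfy : ∀ y, Measurable fun x => f x y := fun y =>
    hf.comp (measurable_id.prodMk measurable_const)
  have hgy : ∀ y, Measurable (g y) := fun y => hg.comp (measurable_const.prodMk measurable_id)
  rw [lintegral_prod_symm' _ (by fun_prop)]
  simp_rw [lintegral_mul_const _ (hfy _)]
  rw [lintegral_prod _ (by fun_prop)]
  simp_rw [lintegral_const_mul _ (hgy _)]

theorem lintegral_euclideanSpace_fin_three (F : ℝ → ℝ → ℝ → ℝ≥0∞) :
    ∫⁻ w : EuclideanSpace ℝ (Fin 3), F (w 0) (w 1) (w 2) =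
      ∫⁻ p : ℝ × ℝ × ℝ, F p.1 p.2.1 p.2.2 := by
  let e : ℝ × ℝ × ℝ ≃ᵐ EuclideanSpace ℝ (Fin 3) :=
    ((MeasurableEquiv.prodCongr (.refl ℝ) MeasurableEquiv.finTwoArrow.symm).trans
      (MeasurableEquiv.piFinSuccAbove (fun _ : Fin 3 => ℝ) 0).symm).trans
      (MeasurableEquiv.toLp 2 (Fin 3 → ℝ))
  have he : MeasurePreserving e :=
    (EuclideanSpace.volume_preserving_symm_measurableEquiv_toLp (Fin 3)).symm.comp
      ((volume_preserving_piFinSuccAbove (fun _ : Fin 3 => ℝ) 0).symm.comp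
        ((MeasurePreserving.id volume).prod (volume_preserving_finTwoArrow ℝ).symm))
  exact (he.lintegral_comp_emb e.measurableEmbedding _).symm

def decayWeight (R t : ℝ) : ℝ := ((1 + t / R) ^ 2)⁻¹

theorem decayWeight_nonneg (R t : ℝ) : 0 ≤ decayWeight R t := by
  unfold decayWeight; positivity

theorem decayWeight_le_mul_inv_add_sq {R t : ℝ} (hR : 0 < R) (ht : 0 ≤ t) :
    decayWeight R t ≤ R ^ 2 * (R ^ 2 + t ^ 2)⁻¹ := by
  rw [decayWeight, ← div_eq_mul_inv, le_div_iff₀ (by positivity), ← div_eq_inv_mul,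
    div_le_iff₀ (by positivity)]
  field_simp
  nlinarith

theorem decayWeight_le_four_mul {R s t : ℝ} (hR : 0 < R) (hs : 0 ≤ s) (ht : 0 ≤ t)
    (hst : s ≤ t + R) : decayWeight R t ≤ 4 * decayWeight R s := by
  have hsR : s / R ≤ t / R + 1 := by
    rw [← div_self hR.ne', ← add_div]
    gcongr
  have htR : 0 ≤ t / R := by positivity
  calc decayWeight R t = 4 * ((2 * (1 + t / R)) ^ 2)⁻¹ := by
        rw [decayWeight, mul_pow, mul_inv]; ring
    _ ≤ 4 * decayWeight R s := by rw [decayWeight]; gcongr; linarith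

theorem lintegral_decayWeight_mul_le {R : ℝ} (hR : 0 < R) :
    ∫⁻ w : EuclideanSpace ℝ (Fin 3), ENNReal.ofReal
        (decayWeight R √(w 0 ^ 2 + w 1 ^ 2) * decayWeight R √(w 1 ^ 2 + w 2 ^ 2)) ≤
      ENNReal.ofReal (π ^ 3 * R ^ 3) := by
  set k : ℝ → ℝ → ℝ≥0∞ := fun y x => ENNReal.ofReal (R ^ 2 * (R ^ 2 + y ^ 2 + x ^ 2)⁻¹)
  have hk_meas : Measurable (Function.uncurry k) := by fun_prop
  have hk : ∀ y, ∫⁻ x, k y x = ENNReal.ofReal (R ^ 2 * (π / √(R ^ 2 + y ^ 2))) := fun y =>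
    lintegral_ofReal_mul_inv_add_sq (by positivity) (by positivity)
  have hdecay : ∀ a b, ENNReal.ofReal (decayWeight R √(a ^ 2 + b ^ 2)) ≤ k a b := fun a b => by
    refine ENNReal.ofReal_le_ofReal
      ((decayWeight_le_mul_inv_add_sq hR (Real.sqrt_nonneg _)).trans ?_)
    rw [Real.sq_sqrt (by positivity), add_assoc]
  calc _ ≤ ∫⁻ w : EuclideanSpace ℝ (Fin 3), k (w 1) (w 0) * k (w 1) (w 2) := by
        refine lintegral_mono fun w => ?_
        rw [ENNReal.ofReal_mul (decayWeight_nonneg _ _), add_comm (w 0 ^ 2)]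
        exact mul_le_mul' (hdecay _ _) (hdecay _ _)
    _ = ∫⁻ p : ℝ × ℝ × ℝ, k p.2.1 p.1 * k p.2.1 p.2.2 :=
        lintegral_euclideanSpace_fin_three fun x y z => k y x * k y z
    _ = ∫⁻ y, (∫⁻ x, k y x) * ∫⁻ z, k y z :=
        lintegral_prod_prod_mul (f := fun x y => k y x) (by fun_prop) hk_meas
    _ = ∫⁻ y : ℝ, ENNReal.ofReal ((π * R ^ 2) ^ 2 * (R ^ 2 + y ^ 2)⁻¹) := by
        refine lintegral_congr fun y => ?_
        rw [hk, ← ENNReal.ofReal_mul (by positivity)]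
        congr 1
        field_simp
        rw [Real.sq_sqrt (by positivity)]
    _ = ENNReal.ofReal (π ^ 3 * R ^ 3) := by
        rw [lintegral_ofReal_mul_inv_add_sq (by positivity) (by positivity), Real.sqrt_sq hR.le]
        congr 1
        field_simp

theorem dist_sub_le_infDist_preimage_closedBall {α β : Type*} [PseudoMetricSpace α]
    [PseudoMetricSpace β] {f : α → β} (hf : LipschitzWith 1 f) {c : β} {r : ℝ}
    (hne : (f ⁻¹' Metric.closedBall c r).Nonempty) (x : α) :
    dist (f x) c - r ≤ Metric.infDist x (f ⁻¹' Metric.closedBall c r) := by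
  rw [Metric.le_infDist hne]
  intro y hy
  have hfxy : dist (f x) (f y) ≤ dist x y := by simpa using hf.dist_le_mul x y
  linarith [dist_triangle (f x) (f y) c, Metric.mem_closedBall.1 hy]

def coordPair {n : ℕ} (i j : Fin n) (w : EuclideanSpace ℝ (Fin n)) : EuclideanSpace ℝ (Fin 2) :=
  !₂[w i, w j]

theorem norm_coordPair {n : ℕ} (i j : Fin n) (w : EuclideanSpace ℝ (Fin n)) :
    ‖coordPair i j w‖ = √(w i ^ 2 + w j ^ 2) := by
  simp [coordPair, EuclideanSpace.norm_eq, Fin.sum_univ_two]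

theorem lipschitzWith_coordPair {n : ℕ} {i j : Fin n} (hij : i ≠ j) :
    LipschitzWith 1 (coordPair i j) := by
  refine LipschitzWith.of_dist_le_mul fun v w => ?_
  rw [NNReal.coe_one, one_mul, dist_eq_norm, dist_eq_norm, EuclideanSpace.norm_eq (v - w)]
  have hsub : coordPair i j v - coordPair i j w = coordPair i j (v - w) := by
    ext k; fin_cases k <;> simp [coordPair]
  rw [hsub, norm_coordPair]
  gcongr
  calc (v - w) i ^ 2 + (v - w) j ^ 2 = ∑ k ∈ {i, j}, ‖(v - w) k‖ ^ 2 := by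
        simp [Finset.sum_pair hij]
    _ ≤ ∑ k, ‖(v - w) k‖ ^ 2 := Finset.sum_le_univ_sum_of_nonneg fun k => by positivity

theorem decayWeight_infDist_tube_le {n : ℕ} {R : ℝ} (hR : 0 < R) {i j : Fin n} (hij : i ≠ j)
    (w : EuclideanSpace ℝ (Fin n)) :
    decayWeight R (Metric.infDist w {w' : EuclideanSpace ℝ (Fin n) | w' i ^ 2 + w' j ^ 2 ≤ R ^ 2})
      ≤ 4 * decayWeight R √(w i ^ 2 + w j ^ 2) := by
  have htube : {w' : EuclideanSpace ℝ (Fin n) | w' i ^ 2 + w' j ^ 2 ≤ R ^ 2} =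
      coordPair i j ⁻¹' Metric.closedBall 0 R := by
    ext w'
    simp [norm_coordPair, Real.sqrt_le_iff, hR.le]
  have hne : (coordPair i j ⁻¹' Metric.closedBall 0 R).Nonempty :=
    ⟨0, by simp [norm_coordPair, hR.le]⟩
  have hdist := dist_sub_le_infDist_preimage_closedBall (lipschitzWith_coordPair hij) hne w
  rw [dist_zero_right, norm_coordPair] at hdist
  rw [htube]
  exact decayWeight_le_four_mul hR (Real.sqrt_nonneg _) Metric.infDist_nonneg (by linarith)

theorem lintegral_norm_mul_le_of_le_tube_decay {E F : Type*} [SeminormedAddCommGroup E]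
    [SeminormedAddCommGroup F] {R : ℝ} (hR : 0 < R) {p1 : EuclideanSpace ℝ (Fin 3) → E}
    {p2 : EuclideanSpace ℝ (Fin 3) → F}
    (hp1 : ∀ w, ‖p1 w‖ ≤ R⁻¹ * decayWeight R
      (Metric.infDist w {w' : EuclideanSpace ℝ (Fin 3) | w' 0 ^ 2 + w' 1 ^ 2 ≤ R ^ 2}))
    (hp2 : ∀ w, ‖p2 w‖ ≤ R⁻¹ * decayWeight R
      (Metric.infDist w {w' : EuclideanSpace ℝ (Fin 3) | w' 1 ^ 2 + w' 2 ^ 2 ≤ R ^ 2})) :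
    ∫⁻ w, ENNReal.ofReal (‖p1 w‖ * ‖p2 w‖) ≤ ENNReal.ofReal (16 * π ^ 3 * R) := by
  have hpoint : ∀ w : EuclideanSpace ℝ (Fin 3), ‖p1 w‖ * ‖p2 w‖ ≤ 16 * R⁻¹ ^ 2 *
      (decayWeight R √(w 0 ^ 2 + w 1 ^ 2) * decayWeight R √(w 1 ^ 2 + w 2 ^ 2)) := fun w => by
    have h1 := (hp1 w).trans (mul_le_mul_of_nonneg_left
      (decayWeight_infDist_tube_le hR (by decide : (0 : Fin 3) ≠ 1) w) (by positivity))
    have h2 := (hp2 w).trans (mul_le_mul_of_nonneg_left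
      (decayWeight_infDist_tube_le hR (by decide : (1 : Fin 3) ≠ 2) w) (by positivity))
    calc ‖p1 w‖ * ‖p2 w‖ ≤ _ := mul_le_mul h1 h2 (norm_nonneg _)
          (mul_nonneg (by positivity) (mul_nonneg (by norm_num)
            (decayWeight_nonneg _ _)))
      _ = _ := by ring
  calc _ ≤ ∫⁻ w : EuclideanSpace ℝ (Fin 3), ENNReal.ofReal (16 * R⁻¹ ^ 2) * ENNReal.ofReal
        (decayWeight R √(w 0 ^ 2 + w 1 ^ 2) * decayWeight R √(w 1 ^ 2 + w 2 ^ 2)) := by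
        refine lintegral_mono fun w => ?_
        rw [← ENNReal.ofReal_mul (by positivity)]
        exact ENNReal.ofReal_le_ofReal (hpoint w)
    _ ≤ ENNReal.ofReal (16 * R⁻¹ ^ 2) * ENNReal.ofReal (π ^ 3 * R ^ 3) := by
        rw [lintegral_const_mul' _ _ ENNReal.ofReal_ne_top]
        gcongr
        exact lintegral_decayWeight_mul_le hR
    _ = ENNReal.ofReal (16 * π ^ 3 * R) := by
        rw [← ENNReal.ofReal_mul (by positivity)]
        congr 1
        field_simp

/-- The core computation of Lemma 4.3(iii): the product of two transversal slowly decaying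
weights has integral `≲ R³`, and consequently the product of two slowly decaying wave
packets adapted to transversal tubes of radius `R` (one parallel to the `z`-axis, one
parallel to the `x`-axis, through the origin) has `L¹` norm `≲ R`. -/
theorem statement14 :
    (∃ C : ℝ, 0 < C ∧ ∀ R : ℝ, 0 < R →
      ∫⁻ w : EuclideanSpace ℝ (Fin 3),
        ENNReal.ofReal
          (((1 + Real.sqrt ((w 0) ^ 2 + (w 1) ^ 2) / R) ^ (2 : ℕ))⁻¹ *
            ((1 + Real.sqrt ((w 1) ^ 2 + (w 2) ^ 2) / R) ^ (2 : ℕ))⁻¹) ≤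
        ENNReal.ofReal (C * R ^ 3)) ∧
    (∃ C' : ℝ, 0 < C' ∧ ∀ R : ℝ, 0 < R →
      ∀ p1 p2 : EuclideanSpace ℝ (Fin 3) → ℂ,
        (∀ w, ‖p1 w‖ ≤ R⁻¹ *
          ((1 + Metric.infDist w
              {w' : EuclideanSpace ℝ (Fin 3) | (w' 0) ^ 2 + (w' 1) ^ 2 ≤ R ^ 2} / R)
            ^ (2 : ℕ))⁻¹) →
        (∀ w, ‖p2 w‖ ≤ R⁻¹ *
          ((1 + Metric.infDist w
              {w' : EuclideanSpace ℝ (Fin 3) | (w' 1) ^ 2 + (w' 2) ^ 2 ≤ R ^ 2} / R)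
            ^ (2 : ℕ))⁻¹) →
        ∫⁻ w : EuclideanSpace ℝ (Fin 3), ENNReal.ofReal (‖p1 w‖ * ‖p2 w‖) ≤
          ENNReal.ofReal (C' * R)) :=
  ⟨⟨π ^ 3, by positivity, fun _ hR => lintegral_decayWeight_mul_le hR⟩,
    ⟨16 * π ^ 3, by positivity, fun _ hR _ _ hp1 hp2 =>
      lintegral_norm_mul_le_of_le_tube_decay hR hp1 hp2⟩⟩
end
end
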